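/- arXiv:2105.14998 — 14 statements merged into one kernel-verified Lean document; each statement's English description precedes it below -/
import Mathlib

section
/- Every IIVCG contract is truthful: if a contract t for a common agency setting satisfies the two IIVCG properties, then for every principal ℓ, every true valuation v^ℓ ∈ V^ℓ, and every profile b^{-ℓ} of the other principals' bids, reporting b^ℓ = v^ℓ maximizes principal ℓ's expected utility E_{o∼F_{x*(b^{-ℓ},b^ℓ)}}[v^ℓ(o) − t^ℓ((b^{-ℓ},b^ℓ),o)] over all b^ℓ ∈ V^ℓ. -/
/-- The data of a common agency setting: a finite set `A` of actions, a finite set `O` of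
outcomes, `n` principals, a cost function `ψ`, outcome distributions `F a`, and valuation
domains `V ℓ`. -/
structure CAS where
  /-- the actions available to the agent -/
  A : Type
  [fintypeA : Fintype A]
  [nonemptyA : Nonempty A]
  /-- the outcomes -/
  O : Type
  [fintypeO : Fintype O]
  [nonemptyO : Nonempty O]
  /-- the number of principals -/
  n : ℕ
  /-- the cost of each action -/
  ψ : A → ℝ
  /-- the outcome distribution induced by each action -/
  F : A → O → ℝ
  /-- the valuation domain of each principal -/
  V : Fin n → Set (O → ℝ)

attribute [instance] CAS.fintypeA CAS.nonemptyA CAS.fintypeO CAS.nonemptyO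

namespace CAS

variable (S : CAS)

/-- Validity of a common agency setting: costs are nonnegative and some action has zero
cost, each `F a` is a probability distribution, and valuations are nonnegative. -/
def Valid : Prop :=
  (∀ a, 0 ≤ S.ψ a) ∧ (∃ a, S.ψ a = 0) ∧
    (∀ a o, 0 ≤ S.F a o) ∧ (∀ a, ∑ o, S.F a o = 1) ∧
    (∀ ℓ, ∀ v ∈ S.V ℓ, ∀ o, 0 ≤ v o)

/-- A profile of one vector (valuation/bid) per principal. -/
abbrev Profile := Fin S.n → S.O → ℝ

/-- The profile `b` belongs to the product domain `V = V^1 × ⋯ × V^n`. -/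
def InV (b : S.Profile) : Prop := ∀ ℓ, b ℓ ∈ S.V ℓ

/-- Expectation `E_{o ∼ F_a}[u(o)]`. -/
noncomputable def Exp (a : S.A) (u : S.O → ℝ) : ℝ := ∑ o, S.F a o * u o

/-- Welfare `Wel^a(u) = Σ_ℓ E_{o ∼ F_a}[u^ℓ(o)] − ψ(a)`. -/
noncomputable def Wel (a : S.A) (u : S.Profile) : ℝ := (∑ ℓ, S.Exp a (u ℓ)) - S.ψ a

/-- A contract: a payment rule per principal, mapping a bid profile and an outcome
to a payment. -/
abbrev Contract := Fin S.n → S.Profile → S.O → ℝ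

/-- The agent's expected utility from action `a` under contract `t` at bid profile `b`. -/
noncomputable def agentU (t : S.Contract) (b : S.Profile) (a : S.A) : ℝ :=
  (∑ ℓ, S.Exp a (t ℓ b)) - S.ψ a

/-- `x` is the agent's chosen action `x*`: it maximizes the agent's expected utility, and
among utility-maximizing actions it maximizes the declared welfare. -/
def IsAgentChoice (t : S.Contract) (x : S.Profile → S.A) : Prop :=
  ∀ b, S.InV b →
    (∀ a, S.agentU t b a ≤ S.agentU t b (x b)) ∧
    (∀ a, S.agentU t b a = S.agentU t b (x b) → S.Wel a b ≤ S.Wel (x b) b)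

/-- `astar` selects, for each profile `u`, an action `a*(u)` maximizing welfare. -/
def IsMaxSelection (astar : S.Profile → S.A) : Prop :=
  ∀ u a, S.Wel a u ≤ S.Wel (astar u) u

/-- The IIVCG conditions for contract `t` with agent choice `x`:
(1) for every `b ∈ V` the agent's chosen action maximizes declared welfare
(`x*(b) = a*(b)`, so below `x b` plays the role of `a*(b)`); and
(2) there are functions `h^ℓ`, independent of `b^ℓ`, with
`E_{o∼F_{a*(b)}}[t^ℓ(b,o)] = h^ℓ(b^{−ℓ}) − Wel^{a*(b)}(b^{−ℓ},0)`. -/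
def IsIIVCG (t : S.Contract) (x : S.Profile → S.A) : Prop :=
  (∀ b, S.InV b → ∀ a, S.Wel a b ≤ S.Wel (x b) b) ∧
  ∃ h : Fin S.n → S.Profile → ℝ,
    (∀ ℓ, ∀ b b' : S.Profile, (∀ k, k ≠ ℓ → b k = b' k) → h ℓ b = h ℓ b') ∧
    (∀ b, S.InV b → ∀ ℓ, S.Exp (x b) (t ℓ b) =
      h ℓ b - S.Wel (x b) (Function.update b ℓ 0))

/-- Principal `ℓ`'s expected utility `E_{o∼F_{x*(b)}}[v(o) − t^ℓ(b,o)]` when her true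
valuation is `v` and the bid profile is `b`. -/
noncomputable def prinU (t : S.Contract) (x : S.Profile → S.A) (ℓ : Fin S.n)
    (v : S.O → ℝ) (b : S.Profile) : ℝ :=
  S.Exp (x b) (fun o => v o - t ℓ b o)

/-- Truthfulness: reporting the true valuation maximizes each principal's expected
utility, no matter what the others bid. -/
def Truthful (t : S.Contract) (x : S.Profile → S.A) : Prop :=
  ∀ ℓ, ∀ v ∈ S.V ℓ, ∀ b, S.InV b →
    S.prinU t x ℓ v b ≤ S.prinU t x ℓ v (Function.update b ℓ v)

/-- Individual rationality: a truthful principal gets nonnegative expected utility. -/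
def IR (t : S.Contract) (x : S.Profile → S.A) : Prop :=
  ∀ ℓ, ∀ b, S.InV b → ∀ v ∈ S.V ℓ, 0 ≤ S.prinU t x ℓ v (Function.update b ℓ v)

/-- Limited liability: all payments to the agent are nonnegative. -/
def LL (t : S.Contract) : Prop :=
  ∀ ℓ, ∀ b, S.InV b → ∀ o, 0 ≤ t ℓ b o

/-- `L_a`: the nonnegative payment vectors under which action `a` maximizes the agent's
expected utility. -/
def LSet (a : S.A) : Set (S.O → ℝ) :=
  { w | (∀ o, 0 ≤ w o) ∧ ∀ a', S.Exp a' w - S.ψ a' ≤ S.Exp a w - S.ψ a }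

/-- `k_a = inf_{w ∈ L_a} E_{o∼F_a}[w(o)]`. -/
noncomputable def kval (a : S.A) : ℝ := sInf (S.Exp a '' S.LSet a)

/-- The maximal welfare `max_{a ∈ A} Wel^a(u)` at profile `u`. -/
noncomputable def maxWel (u : S.Profile) : ℝ :=
  Finset.univ.sup' Finset.univ_nonempty fun a => S.Wel a u

/-- `m^ℓ(b) = inf_{ṽ ∈ V^ℓ} Wel^{a*(b^{−ℓ},ṽ)}(b^{−ℓ},ṽ) − Wel^{a*(b)}(b^{−ℓ},0)`,
where `x` plays the role of the welfare-maximizing selection `a*`. -/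
noncomputable def mval (x : S.Profile → S.A) (ℓ : Fin S.n) (b : S.Profile) : ℝ :=
  sInf ((fun v => S.maxWel (Function.update b ℓ v)) '' S.V ℓ) -
    S.Wel (x b) (Function.update b ℓ 0)

end CAS

/-- Every IIVCG contract is truthful. -/
theorem every_IIVCG_contract_is_truthful (S : CAS) (hS : S.Valid)
    (t : S.Contract) (x : S.Profile → S.A)
    (hx : S.IsAgentChoice t x) (ht : S.IsIIVCG t x) :
    S.Truthful t x := by
  obtain ⟨h1, h, hind, hpay⟩ := ht
  -- key algebraic identity: Wel a (update b ℓ v) = Exp a v + Wel a (update b ℓ 0)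
  have key : ∀ (a : S.A) (b : S.Profile) (ℓ : Fin S.n) (v : S.O → ℝ),
      S.Wel a (Function.update b ℓ v) = S.Exp a v + S.Wel a (Function.update b ℓ 0) := by
    intro a b ℓ v
    have hsum : ∀ w : S.O → ℝ,
        ∑ k, S.Exp a (Function.update b ℓ w k)
          = S.Exp a w + ∑ k ∈ Finset.univ.erase ℓ, S.Exp a (b k) := by
      intro w
      rw [← Finset.add_sum_erase _ _ (Finset.mem_univ ℓ)]
      congr 1
      · simp [Function.update]
      · exact Finset.sum_congr rfl fun k hk => by
          rw [Function.update_of_ne (Finset.ne_of_mem_erase hk)]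
    have h0 : S.Exp a (0 : S.O → ℝ) = 0 := by simp [CAS.Exp]
    simp only [CAS.Wel, hsum, h0]
    ring
  intro ℓ v hv b hb
  set b' := Function.update b ℓ v with hb'
  have hb'V : S.InV b' := by
    intro k
    by_cases hk : k = ℓ
    · subst hk; simpa [hb'] using hv
    · simpa [hb', Function.update_of_ne hk] using hb k
  -- expression of prinU
  have prin_eq : ∀ c : S.Profile, S.InV c → (∀ k, k ≠ ℓ → c k = b k) →
      S.prinU t x ℓ v c = S.Wel (x c) (Function.update c ℓ v) - h ℓ b := by
    intro c hc hcb
    have hp := hpay c hc ℓ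
    have hexp : S.Exp (x c) (fun o => v o - t ℓ c o)
        = S.Exp (x c) v - S.Exp (x c) (t ℓ c) := by
      simp [CAS.Exp, mul_sub, Finset.sum_sub_distrib]
    have hh : h ℓ c = h ℓ b := hind ℓ c b hcb
    rw [CAS.prinU, hexp, hp, key (x c) c ℓ v, hh]
    ring
  have e1 : S.prinU t x ℓ v b = S.Wel (x b) (Function.update b ℓ v) - h ℓ b :=
    prin_eq b hb (fun _ _ => rfl)
  have e2 : S.prinU t x ℓ v b' = S.Wel (x b') b' - h ℓ b := by
    have := prin_eq b' hb'V (fun k hk => Function.update_of_ne hk _ _)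
    rwa [show Function.update b' ℓ v = b' by simp [hb', Function.update_idem]] at this
  have hw : S.Wel (x b) b' ≤ S.Wel (x b') b' := h1 b' hb'V (x b)
  rw [e1, e2, ← hb']
  linarith
end

section
/- Uniqueness of IIVCG: suppose each valuation domain V^ℓ is a convex subset of ℝ^m_{≥0}, and let t be a truthful contract such that for every bid profile b ∈ V the agent's chosen action maximizes the declared welfare, i.e., x*(b) = a*(b). Then t is an IIVCG contract; in particular there exist functions h^1,…,h^n, where h^ℓ depends only on the bids b^{-ℓ} of the principals other than ℓ, such that E_{o∼F_{a*(b)}}[t^ℓ(b,o)] = h^ℓ(b^{-ℓ}) − Wel^{a*(b)}(b^{-ℓ},0) for every b ∈ V and every principal ℓ. -/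
section Aux

private lemma key_sandwich {E : Type*} [AddCommGroup E] [Module ℝ E] {K : Set E}
    (hK : Convex ℝ K) (f g : E → ℝ) (L : E → E → ℝ)
    (hlin : ∀ z, IsLinearMap ℝ (L z))
    (hf : ∀ v ∈ K, ∀ w ∈ K, L w (v - w) ≤ f v - f w)
    (hg : ∀ v ∈ K, ∀ w ∈ K, L w (v - w) ≤ g v - g w)
    {v w : E} (hv : v ∈ K) (hw : w ∈ K) :
    f v - g v = f w - g w := by
  set C : ℝ := L v (v - w) - L w (v - w) with hC
  set D : ℝ := (f v - g v) - (f w - g w) with hD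
  have main : ∀ N : ℕ, 0 < N → |D| ≤ C / N := by
    intro N hN
    have hN0 : (N : ℝ) ≠ 0 := Nat.cast_ne_zero.mpr hN.ne'
    have hNpos : (0:ℝ) < N := by exact_mod_cast hN
    set u : ℕ → E := fun i => w + ((i : ℝ) / N) • (v - w) with hu
    set δ : E := ((1:ℝ)/N) • (v - w) with hδ
    have hmem : ∀ i ≤ N, u i ∈ K := by
      intro i hi
      have h1 : (0:ℝ) ≤ (i:ℝ)/N := by positivity
      have h2 : (i:ℝ)/N ≤ 1 := by
        rw [div_le_one hNpos]; exact_mod_cast hi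
      have hmem' := hK hw hv (by linarith : (0:ℝ) ≤ 1 - (i:ℝ)/N) h1 (by ring)
      convert hmem' using 1
      simp only [hu]
      module
    have hstep : ∀ i : ℕ, u (i+1) - u i = δ := by
      intro i
      simp only [hu, hδ]
      rw [add_sub_add_left_eq_sub, ← sub_smul]
      congr 1
      push_cast
      field_simp
      ring
    have hstep' : ∀ i : ℕ, u i - u (i+1) = -δ := by
      intro i; rw [← hstep i]; abel
    have huN : u N = v := by
      simp only [hu]
      rw [div_self hN0, one_smul]
      abel
    have hu0 : u 0 = w := by simp [hu]
    have hbound : ∀ i ∈ Finset.range N,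
        |(f (u (i+1)) - f (u i)) - (g (u (i+1)) - g (u i))|
          ≤ L (u (i+1)) δ - L (u i) δ := by
      intro i hi
      rw [Finset.mem_range] at hi
      have hui : u i ∈ K := hmem i (le_of_lt hi)
      have hui1 : u (i+1) ∈ K := hmem (i+1) hi
      have lo_f := hf (u (i+1)) hui1 (u i) hui
      have lo_g := hg (u (i+1)) hui1 (u i) hui
      have hi_f := hf (u i) hui (u (i+1)) hui1
      have hi_g := hg (u i) hui (u (i+1)) hui1
      rw [hstep i] at lo_f lo_g
      rw [hstep' i, (hlin (u (i+1))).map_neg] at hi_f hi_g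
      rw [abs_sub_le_iff]
      constructor <;> linarith
    have tele_f : ∑ i ∈ Finset.range N, (f (u (i+1)) - f (u i)) = f v - f w := by
      rw [Finset.sum_range_sub (fun i => f (u i)), huN, hu0]
    have tele_g : ∑ i ∈ Finset.range N, (g (u (i+1)) - g (u i)) = g v - g w := by
      rw [Finset.sum_range_sub (fun i => g (u i)), huN, hu0]
    have hDsum : D = ∑ i ∈ Finset.range N,
        ((f (u (i+1)) - f (u i)) - (g (u (i+1)) - g (u i))) := by
      rw [Finset.sum_sub_distrib, tele_f, tele_g, hD]; ring
    have hsumL : ∑ i ∈ Finset.range N, (L (u (i+1)) δ - L (u i) δ)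
        = L v δ - L w δ := by
      rw [Finset.sum_range_sub (fun i => L (u i) δ), huN, hu0]
    have habs : |D| ≤ L v δ - L w δ := by
      rw [hDsum]
      calc |∑ i ∈ Finset.range N,
            ((f (u (i+1)) - f (u i)) - (g (u (i+1)) - g (u i)))|
          ≤ ∑ i ∈ Finset.range N,
            |(f (u (i+1)) - f (u i)) - (g (u (i+1)) - g (u i))| :=
            Finset.abs_sum_le_sum_abs _ _
        _ ≤ ∑ i ∈ Finset.range N, (L (u (i+1)) δ - L (u i) δ) :=
            Finset.sum_le_sum hbound
        _ = L v δ - L w δ := hsumL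
    have hLv : L v δ = (1/(N:ℝ)) * L v (v - w) := by
      rw [hδ, (hlin v).map_smul]; simp [smul_eq_mul]
    have hLw : L w δ = (1/(N:ℝ)) * L w (v - w) := by
      rw [hδ, (hlin w).map_smul]; simp [smul_eq_mul]
    rw [hLv, hLw] at habs
    calc |D| ≤ (1/(N:ℝ)) * L v (v - w) - (1/(N:ℝ)) * L w (v - w) := habs
      _ = C / N := by rw [hC]; ring
  have hC0 : 0 ≤ C := by
    have h1 := main 1 one_pos
    have h2 := abs_nonneg D
    simp only [Nat.cast_one, div_one] at h1
    linarith
  have hD0 : D = 0 := by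
    by_contra hne
    have hpos : 0 < |D| := abs_pos.mpr hne
    obtain ⟨N, hNgt⟩ := exists_nat_gt (C / |D|)
    have hNr : (0:ℝ) < N :=
      lt_of_le_of_lt (div_nonneg hC0 (le_of_lt hpos)) hNgt
    have hNpos : 0 < N := by exact_mod_cast hNr
    have h1 : C < N * |D| := by
      rw [div_lt_iff₀ hpos] at hNgt; linarith
    have h2 : C / N < |D| := by
      rw [div_lt_iff₀ hNr]; linarith
    have h3 := main N hNpos
    linarith
  rw [hD] at hD0
  linarith

private lemma exp_linear (S : CAS) (a : S.A) : IsLinearMap ℝ (S.Exp a) := by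
  constructor
  · intro p q
    simp [CAS.Exp, Pi.add_apply, mul_add, Finset.sum_add_distrib]
  · intro c p
    simp only [CAS.Exp, Pi.smul_apply, smul_eq_mul, Finset.mul_sum]
    exact Finset.sum_congr rfl fun o _ => by ring

private lemma exp_sub (S : CAS) (a : S.A) (p q : S.O → ℝ) :
    S.Exp a (p - q) = S.Exp a p - S.Exp a q := by
  simp [CAS.Exp, Pi.sub_apply, mul_sub, Finset.sum_sub_distrib]

private lemma exp_sub' (S : CAS) (a : S.A) (p q : S.O → ℝ) :
    S.Exp a (fun o => p o - q o) = S.Exp a p - S.Exp a q := exp_sub S a p q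

private lemma wel_update (S : CAS) (a : S.A) (b : S.Profile) (ℓ : Fin S.n)
    (v : S.O → ℝ) :
    S.Wel a (Function.update b ℓ v) = S.Exp a v + S.Wel a (Function.update b ℓ 0) := by
  simp only [CAS.Wel]
  have h : ∀ u : S.O → ℝ, ∑ k, S.Exp a (Function.update b ℓ u k)
      = S.Exp a u + ∑ k ∈ Finset.univ.erase ℓ, S.Exp a (b k) := by
    intro u
    rw [← Finset.add_sum_erase _ (fun k => S.Exp a (Function.update b ℓ u k))
      (Finset.mem_univ ℓ), Function.update_self]
    congr 1
    refine Finset.sum_congr rfl fun k hk => ?_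
    rw [Function.update_of_ne (Finset.ne_of_mem_erase hk)]
  have h0 : S.Exp a (0 : S.O → ℝ) = 0 := by simp [CAS.Exp]
  rw [h v, h 0, h0]
  ring

private lemma inv_update (S : CAS) {b : S.Profile} (hb : S.InV b) {ℓ : Fin S.n}
    {v : S.O → ℝ} (hv : v ∈ S.V ℓ) : S.InV (Function.update b ℓ v) := by
  intro k
  rcases eq_or_ne k ℓ with h | h
  · subst h; rwa [Function.update_self]
  · rw [Function.update_of_ne h]; exact hb k

end Aux

/-- Uniqueness of IIVCG: on convex valuation domains, every truthful
contract under which the agent always maximizes the declared welfare is IIVCG. -/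
theorem uniqueness_of_IIVCG (S : CAS) (hS : S.Valid)
    (hconv : ∀ ℓ, Convex ℝ (S.V ℓ))
    (t : S.Contract) (x : S.Profile → S.A)
    (hx : S.IsAgentChoice t x)
    (hwel : ∀ b, S.InV b → ∀ a, S.Wel a b ≤ S.Wel (x b) b)
    (htruth : S.Truthful t x) :
    S.IsIIVCG t x := by
  classical
  refine ⟨hwel, ?_⟩
  set P : Fin S.n → S.Profile → ℝ := fun ℓ b =>
    S.Exp (x b) (t ℓ b) + S.Wel (x b) (Function.update b ℓ 0) with hPdef
  have hconst : ∀ (b : S.Profile), S.InV b → ∀ ℓ, ∀ v ∈ S.V ℓ, ∀ w ∈ S.V ℓ,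
      P ℓ (Function.update b ℓ v) = P ℓ (Function.update b ℓ w) := by
    intro b hb ℓ v hv w hw
    set f : (S.O → ℝ) → ℝ := fun v =>
      S.Exp (x (Function.update b ℓ v)) v
        - S.Exp (x (Function.update b ℓ v)) (t ℓ (Function.update b ℓ v)) with hfdef
    set g : (S.O → ℝ) → ℝ := fun v =>
      S.Wel (x (Function.update b ℓ v)) (Function.update b ℓ v) with hgdef
    set L : (S.O → ℝ) → (S.O → ℝ) → ℝ := fun v u =>
      S.Exp (x (Function.update b ℓ v)) u with hLdef
    have hf : ∀ p ∈ S.V ℓ, ∀ q ∈ S.V ℓ, L q (p - q) ≤ f p - f q := by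
      intro p hp q hq
      have hbq : S.InV (Function.update b ℓ q) := inv_update S hb hq
      have ht := htruth ℓ p hp (Function.update b ℓ q) hbq
      rw [Function.update_idem] at ht
      have ePr : ∀ c : S.Profile, S.prinU t x ℓ p c
          = S.Exp (x c) p - S.Exp (x c) (t ℓ c) := by
        intro c
        simp only [CAS.prinU]
        exact exp_sub' S (x c) p (t ℓ c)
      rw [ePr, ePr] at ht
      have eL : L q (p - q) = L q p - L q q := exp_sub S _ p q
      simp only [hfdef, hLdef] at *
      rw [eL]
      have eSub := exp_sub S (x (Function.update b ℓ q)) p q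
      linarith
    have hg : ∀ p ∈ S.V ℓ, ∀ q ∈ S.V ℓ, L q (p - q) ≤ g p - g q := by
      intro p hp q hq
      have hbp : S.InV (Function.update b ℓ p) := inv_update S hb hp
      have hW := hwel (Function.update b ℓ p) hbp (x (Function.update b ℓ q))
      have e1 := wel_update S (x (Function.update b ℓ q)) b ℓ p
      have e2 := wel_update S (x (Function.update b ℓ q)) b ℓ q
      have eL : L q (p - q) = L q p - L q q := exp_sub S _ p q
      simp only [hgdef, hLdef] at *
      rw [eL]
      linarith
    have hkey := key_sandwich (hconv ℓ) f g L
      (fun z => exp_linear S (x (Function.update b ℓ z))) hf hg hv hw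
    have ePg : ∀ p : S.O → ℝ, P ℓ (Function.update b ℓ p) = g p - f p := by
      intro p
      have e1 := wel_update S (x (Function.update b ℓ p)) b ℓ p
      simp only [hPdef, hfdef, hgdef, Function.update_idem]
      linarith
    rw [ePg v, ePg w]
    linarith
  refine ⟨fun ℓ b =>
    if hex : ∃ v, v ∈ S.V ℓ ∧ S.InV (Function.update b ℓ v) then
      P ℓ (Function.update b ℓ hex.choose) else 0, ?_, ?_⟩
  · intro ℓ b b' hbb'
    have e : Function.update b ℓ = Function.update b' ℓ := by
      funext p k
      rcases eq_or_ne k ℓ with h | h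
      · subst h; rw [Function.update_self, Function.update_self]
      · rw [Function.update_of_ne h, Function.update_of_ne h, hbb' k h]
    simp only [e]
  · intro b hb ℓ
    have hex : ∃ v, v ∈ S.V ℓ ∧ S.InV (Function.update b ℓ v) :=
      ⟨b ℓ, hb ℓ, by rwa [Function.update_eq_self]⟩
    beta_reduce
    rw [dif_pos hex]
    have hspec := hex.choose_spec
    have h1 : P ℓ (Function.update b ℓ hex.choose)
        = P ℓ (Function.update b ℓ (b ℓ)) :=
      hconst b hb ℓ _ hspec.1 _ (hb ℓ)
    rw [Function.update_eq_self] at h1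
    rw [h1]
    simp only [hPdef]
    ring
end

section
/- Every Auction-Inspired contract, defined by t^ℓ(b,o) = Wel^{a*(b^{-ℓ},0)}(b^{-ℓ},0) − Wel^{a*(b)}(b) + b^ℓ(o) for every principal ℓ, bid profile b ∈ V and outcome o, is an IIVCG contract. -/
/-- Every Auction-Inspired contract,
`t^ℓ(b,o) = Wel^{a*(b^{−ℓ},0)}(b^{−ℓ},0) − Wel^{a*(b)}(b) + b^ℓ(o)`, is IIVCG. -/
theorem auction_inspired_is_IIVCG (S : CAS) (hS : S.Valid)
    (astar : S.Profile → S.A) (ha : S.IsMaxSelection astar)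
    (t : S.Contract)
    (ht : ∀ ℓ b o, t ℓ b o =
      S.Wel (astar (Function.update b ℓ 0)) (Function.update b ℓ 0) -
        S.Wel (astar b) b + b ℓ o)
    (x : S.Profile → S.A) (hx : S.IsAgentChoice t x) :
    S.IsIIVCG t x := by
  obtain ⟨hψ, -, hF, hFsum, hV⟩ := hS
  -- expectation of constant plus function
  have hexp : ∀ (a : S.A) (c : ℝ) (f : S.O → ℝ),
      S.Exp a (fun o => c + f o) = c + S.Exp a f := by
    intro a c f
    simp [CAS.Exp, mul_add, Finset.sum_add_distrib, ← Finset.sum_mul, hFsum a]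
  -- expected payment from ℓ under action a
  have hexp_t : ∀ (a : S.A) (b : S.Profile) (ℓ : Fin S.n),
      S.Exp a (t ℓ b) =
        (S.Wel (astar (Function.update b ℓ 0)) (Function.update b ℓ 0) -
          S.Wel (astar b) b) + S.Exp a (b ℓ) := by
    intro a b ℓ
    have : t ℓ b = fun o =>
        (S.Wel (astar (Function.update b ℓ 0)) (Function.update b ℓ 0) -
          S.Wel (astar b) b) + b ℓ o := by
      funext o; rw [ht]
    rw [this, hexp]
  -- welfare after zeroing out coordinate ℓ
  have hWel_update : ∀ (a : S.A) (b : S.Profile) (ℓ : Fin S.n),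
      S.Wel a (Function.update b ℓ 0) = S.Wel a b - S.Exp a (b ℓ) := by
    intro a b ℓ
    simp only [CAS.Wel]
    have h1 : ∀ k, S.Exp a (Function.update b ℓ 0 k) =
        Function.update (fun k => S.Exp a (b k)) ℓ 0 k := by
      intro k
      by_cases hk : k = ℓ <;> simp [Function.update_apply, hk, CAS.Exp]
    rw [Finset.sum_congr rfl fun k _ => h1 k,
      Finset.sum_update_of_mem (Finset.mem_univ ℓ), zero_add]
    have h2 : (∑ k, S.Exp a (b k)) =
        S.Exp a (b ℓ) + ∑ k ∈ Finset.univ \ {ℓ}, S.Exp a (b k) := by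
      rw [Finset.sum_eq_sum_sdiff_singleton_add (Finset.mem_univ ℓ)]; ring
    rw [h2]; ring
  -- agent's utility is welfare plus a constant (in a)
  have hagent : ∀ (b : S.Profile) (a : S.A),
      S.agentU t b a =
        (∑ ℓ, (S.Wel (astar (Function.update b ℓ 0)) (Function.update b ℓ 0) -
          S.Wel (astar b) b)) + S.Wel a b := by
    intro b a
    simp only [CAS.agentU]
    rw [Finset.sum_congr rfl fun ℓ _ => hexp_t a b ℓ, Finset.sum_add_distrib]
    simp only [CAS.Wel]
    ring
  -- (1): x b maximizes welfare
  have hmax : ∀ b, S.InV b → ∀ a, S.Wel a b ≤ S.Wel (x b) b := by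
    intro b hb a
    have := (hx b hb).1 a
    rw [hagent b a, hagent b (x b)] at this
    linarith
  refine ⟨hmax, fun ℓ b =>
      S.Wel (astar (Function.update b ℓ 0)) (Function.update b ℓ 0), ?_, ?_⟩
  · intro ℓ b b' hbb
    have : Function.update b ℓ 0 = Function.update b' ℓ 0 := by
      funext k
      by_cases hk : k = ℓ <;> simp [Function.update_apply, hk, hbb k]
    dsimp only
    rw [this]
  · intro b hb ℓ
    have hxb : S.Wel (x b) b = S.Wel (astar b) b :=
      le_antisymm (ha b (x b)) (hmax b hb (astar b))
    dsimp only
    rw [hexp_t, hWel_update (x b) b ℓ, hxb]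
    ring
end

section
/- Every Auction-Inspired contract satisfies individual rationality: under the contract t^ℓ(b,o) = Wel^{a*(b^{-ℓ},0)}(b^{-ℓ},0) − Wel^{a*(b)}(b) + b^ℓ(o), for every principal ℓ, every profile b^{-ℓ} of the other principals' bids, and every true valuation v^ℓ ∈ V^ℓ, principal ℓ's expected utility when bidding truthfully satisfies E_{o∼F_{x*(b^{-ℓ},v^ℓ)}}[v^ℓ(o) − t^ℓ((b^{-ℓ},v^ℓ),o)] = max_{a∈A} Wel^a(b^{-ℓ},v^ℓ) − max_{a∈A} Wel^a(b^{-ℓ},0) ≥ 0. -/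
/-- Every Auction-Inspired contract is individually rational: a
truthful principal's expected utility equals
`max_a Wel^a(b^{−ℓ},v^ℓ) − max_a Wel^a(b^{−ℓ},0) ≥ 0`. -/
theorem auction_inspired_is_IR (S : CAS) (hS : S.Valid)
    (astar : S.Profile → S.A) (ha : S.IsMaxSelection astar)
    (t : S.Contract)
    (ht : ∀ ℓ b o, t ℓ b o =
      S.Wel (astar (Function.update b ℓ 0)) (Function.update b ℓ 0) -
        S.Wel (astar b) b + b ℓ o)
    (x : S.Profile → S.A) (hx : S.IsAgentChoice t x) :
    ∀ ℓ, ∀ b, S.InV b → ∀ v ∈ S.V ℓ,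
      S.prinU t x ℓ v (Function.update b ℓ v) =
        S.maxWel (Function.update b ℓ v) - S.maxWel (Function.update b ℓ 0) ∧
      0 ≤ S.prinU t x ℓ v (Function.update b ℓ v) := by
  obtain ⟨hψ, -, hF0, hF1, hV⟩ := hS
  have hmax : ∀ u, S.maxWel u = S.Wel (astar u) u := by
    intro u
    apply le_antisymm
    · exact Finset.sup'_le _ _ fun a _ => ha u a
    · exact Finset.le_sup' (fun a => S.Wel a u) (Finset.mem_univ (astar u))
  intro ℓ b hb v hv
  set b' := Function.update b ℓ v with hb'
  have hupd : Function.update b' ℓ 0 = Function.update b ℓ 0 := by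
    simp [hb', Function.update_idem]
  have hconst : ∀ a (c : ℝ), S.Exp a (fun _ => c) = c := by
    intro a c
    simp [CAS.Exp, ← Finset.sum_mul, hF1 a]
  have hval : S.prinU t x ℓ v b' = S.maxWel b' - S.maxWel (Function.update b ℓ 0) := by
    have hfun : (fun o => v o - t ℓ b' o) = fun _ =>
        S.Wel (astar b') b' -
          S.Wel (astar (Function.update b ℓ 0)) (Function.update b ℓ 0) := by
      funext o
      rw [ht]
      have : b' ℓ o = v o := by simp [hb']
      rw [hupd, this]
      ring
    rw [CAS.prinU, hfun, hconst, hmax, hmax]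
  refine ⟨hval, ?_⟩
  rw [hval]
  have h1 : S.Wel (astar (Function.update b ℓ 0)) (Function.update b ℓ 0) ≤
      S.Wel (astar (Function.update b ℓ 0)) b' := by
    rw [CAS.Wel, CAS.Wel]
    gcongr with k _
    by_cases hk : k = ℓ
    · subst hk
      simp only [hb', Function.update_self, CAS.Exp, Pi.zero_apply, mul_zero,
        Finset.sum_const_zero]
      exact Finset.sum_nonneg fun o _ => mul_nonneg (hF0 _ _) (hV _ v hv o)
    · simp [hb', Function.update_of_ne hk]
  have h2 : S.Wel (astar (Function.update b ℓ 0)) b' ≤ S.maxWel b' :=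
    Finset.le_sup' (fun a => S.Wel a b') (Finset.mem_univ _)
  rw [hmax (Function.update b ℓ 0)]
  linarith
end

section
/- Auction-Inspired contracts can violate limited liability: in the setting with two actions a_1, a_2 of costs ψ(a_1)=0, ψ(a_2)=ε for fixed ε>0, two outcomes o_1, o_2, distributions F_{a_1} assigning probability 1/2 to each outcome and F_{a_2} assigning probability 1 to o_2, and a single principal with valuation domain V^1 = ℝ²_{≥0}, for any ε' with ε'/2 > ε and the bid b^1 = (0,ε'), the welfare-maximizing action is a*(b) = a_2 and the Auction-Inspired payment is t^1(b,o_1) = ε − ε' < 0; hence the Auction-Inspired contract for this setting does not satisfy limited liability. -/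
/-- The setting of the LL-IR tradeoff example: two actions with costs `0` and `ε`, two
outcomes, `F_{a_1} = (1/2, 1/2)`, `F_{a_2} = (0,1)`, and one principal with domain
`ℝ²_{≥0}`. Action `a_1` is index `0` and `a_2` is index `1`; outcome `o_1` is index `0`
and `o_2` is index `1`. -/
noncomputable abbrev tradeoffSetting (ε : ℝ) : CAS where
  A := Fin 2
  O := Fin 2
  n := 1
  ψ := fun a => if a = 0 then 0 else ε
  F := fun a o => if a = 0 then 1 / 2 else if o = 0 then 0 else 1
  V := fun _ => { v | ∀ o, 0 ≤ v o }

/-- Auction-Inspired contracts can violate limited liability: for the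
bid `b^1 = (0, ε')` with `ε'/2 > ε`, the welfare-maximizing action is `a_2` and the
Auction-Inspired payment is `t^1(b, o_1) = ε − ε' < 0`, so LL fails. -/
theorem auction_inspired_violates_LL (ε ε' : ℝ) (hε : 0 < ε) (hε' : ε < ε' / 2)
    (b : (tradeoffSetting ε).Profile)
    (hb : ∀ ℓ, b ℓ = fun o => if o = 0 then 0 else ε')
    (t : (tradeoffSetting ε).Contract)
    (ht : ∀ ℓ b' o, t ℓ b' o =
      (tradeoffSetting ε).maxWel (Function.update b' ℓ 0) -
        (tradeoffSetting ε).maxWel b' + b' ℓ o) :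
    (∀ a, a ≠ 1 → (tradeoffSetting ε).Wel a b < (tradeoffSetting ε).Wel 1 b) ∧
      t 0 b 0 = ε - ε' ∧ ε - ε' < 0 ∧ ¬ (tradeoffSetting ε).LL t := by
  have hepos : 0 < ε' := by linarith
  have hb0 := hb 0
  have hsup : ∀ f : Fin 2 → ℝ,
      (Finset.univ.sup' Finset.univ_nonempty f) = max (f 0) (f 1) := by
    intro f
    apply le_antisymm
    · apply Finset.sup'_le
      intro a _
      fin_cases a
      · exact le_max_left _ _
      · exact le_max_right _ _
    · exact max_le (Finset.le_sup' f (Finset.mem_univ 0))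
        (Finset.le_sup' f (Finset.mem_univ 1))
  have hW0 : (tradeoffSetting ε).Wel 0 b = ε' / 2 := by
    simp [CAS.Wel, CAS.Exp, Fin.sum_univ_one, Fin.sum_univ_two, hb0, tradeoffSetting]
    ring
  have hW1 : (tradeoffSetting ε).Wel 1 b = ε' - ε := by
    simp [CAS.Wel, CAS.Exp, Fin.sum_univ_one, Fin.sum_univ_two, hb0, tradeoffSetting]
  have hWu0 : (tradeoffSetting ε).Wel 0 (Function.update b 0 0) = 0 := by
    simp [CAS.Wel, CAS.Exp, Fin.sum_univ_one, Fin.sum_univ_two, tradeoffSetting]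
  have hWu1 : (tradeoffSetting ε).Wel 1 (Function.update b 0 0) = -ε := by
    simp [CAS.Wel, CAS.Exp, Fin.sum_univ_one, Fin.sum_univ_two, tradeoffSetting]
  have hM : (tradeoffSetting ε).maxWel b = ε' - ε := by
    rw [CAS.maxWel, hsup, hW0, hW1]
    exact max_eq_right (by linarith)
  have hMu : (tradeoffSetting ε).maxWel (Function.update b 0 0) = 0 := by
    rw [CAS.maxWel, hsup, hWu0, hWu1]
    exact max_eq_left (by linarith)
  have htval : t 0 b 0 = ε - ε' := by
    rw [ht 0 b 0, hM, hMu, hb0]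
    norm_num
  refine ⟨?_, htval, by linarith, ?_⟩
  · intro a ha
    have ha0 : a = 0 := by
      fin_cases a
      · rfl
      · exact absurd rfl ha
    rw [ha0, hW0, hW1]
    linarith
  · intro hLL
    have hInV : (tradeoffSetting ε).InV b := by
      intro ℓ
      rw [hb ℓ]
      intro o
      dsimp only
      split <;> linarith
    have hge := hLL 0 b hInV 0
    rw [htval] at hge
    linarith
end

section
/- LL-IR tradeoff: consider the common agency setting with two actions a_1, a_2 of costs ψ(a_1)=0, ψ(a_2)=ε for fixed ε>0, two outcomes o_1, o_2, distributions F_{a_1} assigning probability 1/2 to each outcome and F_{a_2} assigning probability 1 to o_2, and a single principal with valuation domain V^1 = ℝ²_{≥0}. Then no contract t for this setting is simultaneously an IIVCG contract, limited liable (LL), and individually rational (IR). -/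
/-- The LL-IR tradeoff: in the two-action, two-outcome, one-principal
setting above, no contract is simultaneously IIVCG, limited liable and individually
rational. -/
theorem LL_IR_tradeoff (ε : ℝ) (hε : 0 < ε) :
    ¬ ∃ (t : (tradeoffSetting ε).Contract)
        (x : (tradeoffSetting ε).Profile → (tradeoffSetting ε).A),
        (tradeoffSetting ε).IsAgentChoice t x ∧ (tradeoffSetting ε).IsIIVCG t x ∧
          (tradeoffSetting ε).LL t ∧ (tradeoffSetting ε).IR t x := by
  intro hex
  set S := tradeoffSetting ε with hS
  obtain ⟨t, x, hchoice, ⟨hmax, h, hconst, hpay⟩, hLL, hIR⟩ := hex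
  -- basic computations
  have hψ0 : S.ψ 0 = 0 := rfl
  have hψ1 : S.ψ 1 = ε := rfl
  have hψnn : ∀ a : S.A, 0 ≤ S.ψ a := by
    intro a
    show (0:ℝ) ≤ (if a = 0 then 0 else ε)
    by_cases ha : a = (0 : Fin 2)
    · simp [hS, tradeoffSetting, ha]
    · simp [hS, tradeoffSetting, ha]; exact le_of_lt hε
  have hExp0 : ∀ u : Fin 2 → ℝ, S.Exp 0 u = u 0 / 2 + u 1 / 2 := by
    intro u
    show ∑ o, (tradeoffSetting ε).F 0 o * u o = _
    simp [hS, CAS.Exp, tradeoffSetting, Fin.sum_univ_two]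
    ring
  have hExp1 : ∀ u : Fin 2 → ℝ, S.Exp 1 u = u 1 := by
    intro u
    show ∑ o, (tradeoffSetting ε).F 1 o * u o = _
    simp [hS, CAS.Exp, tradeoffSetting, Fin.sum_univ_two]
  have hWel : ∀ (a : S.A) (b : S.Profile), S.Wel a b = S.Exp a (b 0) - S.ψ a := by
    intro a b
    simp [CAS.Wel, Fin.sum_univ_one]
  have hAU : ∀ (b : S.Profile) (a : S.A),
      S.agentU t b a = S.Exp a (t 0 b) - S.ψ a := by
    intro b a
    simp [CAS.agentU, Fin.sum_univ_one]
  have hfin2 : ∀ a : Fin 2, a = 0 ∨ a = 1 := by decide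
  -- profiles
  set b₀ : S.Profile := fun _ _ => 0 with hb₀def
  have hb₀V : S.InV b₀ := fun ℓ o => le_refl 0
  set b₁ : S.Profile := fun _ o => if o = 0 then 0 else 3 * ε with hb₁def
  have hb₁V : S.InV b₁ := by
    intro ℓ o
    by_cases ho : o = (0 : Fin 2)
    · simp [hb₁def, ho]
    · simp [hb₁def, ho]; positivity
  -- updates collapse since there is a single principal
  have hupd : ∀ (b : S.Profile) (v : Fin 2 → ℝ),
      Function.update b 0 v = fun _ => v := by
    intro b v
    funext k
    rw [Subsingleton.elim k 0, Function.update_self]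
  -- h is constant
  have hHconst : ∀ b b' : S.Profile, h 0 b = h 0 b' := by
    intro b b'
    exact hconst 0 b b' (fun k hk => absurd (Subsingleton.elim k 0) hk)
  set H := h 0 b₀ with hHdef
  -- welfare of the zero profile
  have hWel0 : ∀ a : S.A, S.Wel a (fun _ => (0 : Fin 2 → ℝ)) = -S.ψ a := by
    intro a
    rw [hWel]
    rcases hfin2 a with ha | ha <;> subst ha <;> simp [hExp0, hExp1]
  -- payment identity
  have hpayid : ∀ b : S.Profile, S.InV b →
      S.Exp (x b) (t 0 b) = H + S.ψ (x b) := by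
    intro b hb
    have := hpay b hb 0
    rw [hupd, hWel0, hHconst b b₀] at this
    linarith [this]
  -- H ≥ 0
  have hHge : 0 ≤ H := by
    have h1 := (hchoice b₀ hb₀V).1 0
    rw [hAU, hAU, hpayid b₀ hb₀V, hψ0, hExp0] at h1
    have h2 := hLL 0 b₀ hb₀V 0
    have h3 := hLL 0 b₀ hb₀V 1
    linarith
  -- H ≤ 0
  have hHle : H ≤ 0 := by
    have h0V : (fun _ => (0:ℝ)) ∈ S.V 0 := fun o => le_refl 0
    have h1 := hIR 0 b₀ hb₀V _ h0V
    rw [hupd] at h1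
    have hb0' : (fun _ => fun _ => (0:ℝ) : S.Profile) = b₀ := rfl
    rw [hb0'] at h1
    have h2 : S.prinU t x 0 (fun _ => (0:ℝ)) b₀
        = - S.Exp (x b₀) (t 0 b₀) := by
      unfold CAS.prinU
      rcases hfin2 (x b₀) with ha | ha <;> rw [ha] <;>
        simp [hExp0, hExp1] <;> ring
    rw [h2, hpayid b₀ hb₀V] at h1
    have := hψnn (x b₀)
    linarith
  have hH0 : H = 0 := le_antisymm hHle hHge
  -- b₁ evaluation
  have hb₁0 : b₁ 0 = fun o => if o = 0 then 0 else 3 * ε := rfl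
  have hWel0b₁ : S.Wel 0 b₁ = 3 * ε / 2 := by
    rw [hWel, hExp0, hψ0, hb₁0]; norm_num
  have hWel1b₁ : S.Wel 1 b₁ = 3 * ε - ε := by
    rw [hWel, hExp1, hψ1, hb₁0]; norm_num
  -- x b₁ = 1
  have hx1 : x b₁ = 1 := by
    rcases hfin2 (x b₁) with ha | ha
    · exfalso
      have := hmax b₁ hb₁V 1
      rw [ha, hWel0b₁, hWel1b₁] at this
      linarith
    · exact ha
  -- payment at b₁
  have hpay1 : t 0 b₁ 1 = ε := by
    have := hpayid b₁ hb₁V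
    rw [hx1, hExp1, hψ1, hH0] at this
    linarith
  -- contradiction with agent's incentives
  have h1 := (hchoice b₁ hb₁V).1 0
  rw [hAU, hAU, hx1, hExp0, hExp1, hψ0, hψ1, hpay1] at h1
  have h2 := hLL 0 b₁ hb₁V 0
  linarith
end

section
/- An IIVCG contract t satisfies individual rationality if and only if E_{o∼F_{a*(b)}}[t^ℓ(b,o)] ≤ m^ℓ(b) for every principal ℓ and every bid profile b ∈ V, where m^ℓ(b) = inf_{ṽ∈V^ℓ} Wel^{a*(b^{-ℓ},ṽ)}(b^{-ℓ},ṽ) − Wel^{a*(b)}(b^{-ℓ},0). -/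
namespace CAS

variable (S : CAS)

lemma exp_zero (a : S.A) : S.Exp a 0 = 0 := by
  simp [Exp]

lemma exp_sub (a : S.A) (u w : S.O → ℝ) :
    S.Exp a (fun o => u o - w o) = S.Exp a u - S.Exp a w := by
  simp [Exp, mul_sub, Finset.sum_sub_distrib]

lemma exp_nonneg (hS : S.Valid) (a : S.A) (u : S.O → ℝ) (hu : ∀ o, 0 ≤ u o) :
    0 ≤ S.Exp a u :=
  Finset.sum_nonneg fun o _ => mul_nonneg (hS.2.2.1 a o) (hu o)

lemma wel_update_zero (a : S.A) (b : S.Profile) (ℓ : Fin S.n) :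
    S.Wel a b = S.Wel a (Function.update b ℓ 0) + S.Exp a (b ℓ) := by
  have key : ∑ k, S.Exp a (Function.update b ℓ 0 k)
      = ∑ k, S.Exp a (b k) - S.Exp a (b ℓ) := by
    have h1 : ∀ k : Fin S.n, S.Exp a (Function.update b ℓ 0 k)
        = Function.update (fun k => S.Exp a (b k)) ℓ 0 k := by
      intro k
      by_cases hk : k = ℓ
      · subst hk; simp [S.exp_zero]
      · simp [Function.update_of_ne hk]
    rw [Finset.sum_congr rfl fun k _ => h1 k,
      Finset.sum_update_of_mem (Finset.mem_univ ℓ), zero_add,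
      ← Finset.sum_erase_add _ _ (Finset.mem_univ ℓ), Finset.sdiff_singleton_eq_erase]
    ring
  simp only [Wel, key]; ring

lemma inV_update {b : S.Profile} (hb : S.InV b) {ℓ : Fin S.n} {v : S.O → ℝ}
    (hv : v ∈ S.V ℓ) : S.InV (Function.update b ℓ v) := by
  intro k
  by_cases hk : k = ℓ
  · subst hk; simpa using hv
  · simpa [Function.update_of_ne hk] using hb k

lemma maxWel_nonneg (hS : S.Valid) {b : S.Profile} (hb : S.InV b) :
    0 ≤ S.maxWel b := by
  obtain ⟨a0, ha0⟩ := hS.2.1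
  refine le_trans ?_ (Finset.le_sup' (fun a => S.Wel a b) (Finset.mem_univ a0))
  have : 0 ≤ ∑ ℓ, S.Exp a0 (b ℓ) :=
    Finset.sum_nonneg fun ℓ _ => S.exp_nonneg hS a0 (b ℓ) (hS.2.2.2.2 ℓ (b ℓ) (hb ℓ))
  simp only [Wel, ha0]
  linarith

lemma wel_eq_maxWel (x : S.Profile → S.A) {b : S.Profile}
    (h : ∀ a, S.Wel a b ≤ S.Wel (x b) b) : S.Wel (x b) b = S.maxWel b := by
  refine le_antisymm (Finset.le_sup' (fun a => S.Wel a b) (Finset.mem_univ (x b)))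
    (Finset.sup'_le _ _ fun a _ => h a)

end CAS

/-- An IIVCG contract is individually rational iff every principal's
expected payment is at most `m^ℓ(b)` for every bid profile `b ∈ V`. -/
theorem IIVCG_IR_iff_payment_bound (S : CAS) (hS : S.Valid)
    (t : S.Contract) (x : S.Profile → S.A)
    (hx : S.IsAgentChoice t x) (ht : S.IsIIVCG t x) :
    S.IR t x ↔ ∀ ℓ, ∀ b, S.InV b → S.Exp (x b) (t ℓ b) ≤ S.mval x ℓ b := by
  obtain ⟨hw, h, hind, hpay⟩ := ht
  have factA : ∀ b, S.InV b → ∀ ℓ, S.prinU t x ℓ (b ℓ) b = S.Wel (x b) b - h ℓ b := by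
    intro b hb ℓ
    have h1 := hpay b hb ℓ
    have hsub := S.exp_sub (x b) (b ℓ) (t ℓ b)
    have hwu := S.wel_update_zero (x b) b ℓ
    simp only [CAS.prinU]
    rw [hsub, h1]
    linarith
  constructor
  · intro hIR ℓ b hb
    rw [hpay b hb ℓ, CAS.mval, sub_le_sub_iff_right]
    refine le_csInf ⟨_, Set.mem_image_of_mem _ (hb ℓ)⟩ ?_
    rintro y ⟨v, hv, rfl⟩
    set b' := Function.update b ℓ v with hb'def
    have hb' : S.InV b' := S.inV_update hb hv
    have h1 := hIR ℓ b hb v hv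
    have h2 : b' ℓ = v := Function.update_self ℓ v b
    have h3 := factA b' hb' ℓ
    rw [h2] at h3
    have h4 : h ℓ b' = h ℓ b := hind ℓ b' b fun k hk => Function.update_of_ne hk v b
    have h5 := S.wel_eq_maxWel x (hw b' hb')
    rw [h3, h4, h5] at h1
    linarith
  · intro hbd ℓ b hb v hv
    set b' := Function.update b ℓ v with hb'def
    have hb' : S.InV b' := S.inV_update hb hv
    have h2 : b' ℓ = v := Function.update_self ℓ v b
    have h3 := factA b' hb' ℓ
    rw [h2] at h3
    rw [h3]
    have h5 := S.wel_eq_maxWel x (hw b' hb')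
    have h6 := hbd ℓ b' hb'
    rw [hpay b' hb' ℓ, CAS.mval, sub_le_sub_iff_right] at h6
    have h7 : sInf ((fun w => S.maxWel (Function.update b' ℓ w)) '' S.V ℓ)
        ≤ S.maxWel b' := by
      have himg : S.maxWel b' ∈
          (fun w => S.maxWel (Function.update b' ℓ w)) '' S.V ℓ := by
        refine ⟨v, hv, ?_⟩
        simp [hb'def, Function.update_idem]
      refine csInf_le ⟨0, ?_⟩ himg
      rintro y ⟨w, hw', rfl⟩
      exact S.maxWel_nonneg hS (S.inV_update hb' hw')
    linarith
end

section
/- Explicit construction: suppose a common agency setting satisfies k_{a*(b)} ≤ Σ_{ℓ∈[n]} m^ℓ(b) for every bid profile b ∈ V. Define h^ℓ(b^{-ℓ}) = inf_{ṽ∈V^ℓ} Wel^{a*(b^{-ℓ},ṽ)}(b^{-ℓ},ṽ); for every b ∈ V let w^b ∈ L_{a*(b)} satisfy E_{o∼F_{a*(b)}}[w^b(o)] = k_{a*(b)}, and let x^b ∈ ℝ^n_{≥0} satisfy Σ_{ℓ∈[n]} x^b_ℓ = 1 and x^b_ℓ · k_{a*(b)} ≤ m^ℓ(b) for every ℓ.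 Then the contract defined by t^ℓ(b,o) = h^ℓ(b^{-ℓ}) − Wel^{a*(b)}(b^{-ℓ}, x^b_ℓ·w^b) + x^b_ℓ·w^b(o) is an IIVCG contract satisfying both limited liability and individual rationality. -/
namespace CAS

variable (S : CAS)

lemma exp_smul_aux (a : S.A) (c : ℝ) (u : S.O → ℝ) :
    S.Exp a (fun o => c * u o) = c * S.Exp a u := by
  unfold Exp
  rw [Finset.mul_sum]
  exact Finset.sum_congr rfl fun o _ => by ring

lemma exp_affine_aux (h1 : ∀ a, ∑ o, S.F a o = 1) (a : S.A) (C c : ℝ) (u : S.O → ℝ) :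
    S.Exp a (fun o => C + c * u o) = C + c * S.Exp a u := by
  unfold Exp
  calc ∑ o, S.F a o * (C + c * u o)
      = ∑ o, (S.F a o * C + c * (S.F a o * u o)) :=
        Finset.sum_congr rfl fun o _ => by ring
    _ = (∑ o, S.F a o) * C + c * ∑ o, S.F a o * u o := by
        rw [Finset.sum_add_distrib, ← Finset.sum_mul, ← Finset.mul_sum]
    _ = C + c * ∑ o, S.F a o * u o := by rw [h1, one_mul]

lemma exp_zero_aux (a : S.A) : S.Exp a (0 : S.O → ℝ) = 0 := by simp [Exp]

lemma wel_update_aux (a : S.A) (b : S.Profile) (ℓ : Fin S.n) (u : S.O → ℝ) :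
    S.Wel a (Function.update b ℓ u) = S.Wel a (Function.update b ℓ 0) + S.Exp a u := by
  have key : ∀ v : S.O → ℝ, (∑ j, S.Exp a (Function.update b ℓ v j))
      = S.Exp a v + ∑ j ∈ Finset.univ \ {ℓ}, S.Exp a (b j) := by
    intro v
    rw [show (∑ j, S.Exp a (Function.update b ℓ v j))
        = ∑ j, Function.update (fun j => S.Exp a (b j)) ℓ (S.Exp a v) j from
      Finset.sum_congr rfl fun j _ => by
        rcases eq_or_ne j ℓ with rfl | hj
        · simp
        · simp [Function.update_of_ne hj]]
    exact Finset.sum_update_of_mem (Finset.mem_univ ℓ) _ _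
  unfold Wel
  rw [key u, key 0, S.exp_zero_aux a]
  ring

end CAS

/-- Explicit construction: if `k_{a*(b)} ≤ Σ_ℓ m^ℓ(b)` for every
`b ∈ V`, then with `h^ℓ(b^{−ℓ}) = inf_{ṽ∈V^ℓ} Wel^{a*(b^{−ℓ},ṽ)}(b^{−ℓ},ṽ)`, a vector
`w^b ∈ L_{a*(b)}` attaining `k_{a*(b)}`, and weights `x^b ≥ 0` summing to `1` with
`x^b_ℓ · k_{a*(b)} ≤ m^ℓ(b)`, the contract
`t^ℓ(b,o) = h^ℓ(b^{−ℓ}) − Wel^{a*(b)}(b^{−ℓ}, x^b_ℓ·w^b) + x^b_ℓ·w^b(o)` is an IIVCG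
contract satisfying both LL and IR. -/
theorem algorithmic_IIVCG_construction (S : CAS) (hS : S.Valid)
    (astar : S.Profile → S.A) (ha : S.IsMaxSelection astar)
    (hcond : ∀ b, S.InV b → S.kval (astar b) ≤ ∑ ℓ, S.mval astar ℓ b)
    (h : Fin S.n → S.Profile → ℝ)
    (hh : ∀ ℓ b, h ℓ b = sInf ((fun v => S.maxWel (Function.update b ℓ v)) '' S.V ℓ))
    (w : S.Profile → S.O → ℝ)
    (hw : ∀ b, S.InV b →
      w b ∈ S.LSet (astar b) ∧ S.Exp (astar b) (w b) = S.kval (astar b))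
    (xc : S.Profile → Fin S.n → ℝ)
    (hxc : ∀ b, S.InV b → (∀ ℓ, 0 ≤ xc b ℓ) ∧ (∑ ℓ, xc b ℓ) = 1 ∧
      ∀ ℓ, xc b ℓ * S.kval (astar b) ≤ S.mval astar ℓ b)
    (t : S.Contract)
    (ht : ∀ ℓ b o, t ℓ b o =
      h ℓ b - S.Wel (astar b) (Function.update b ℓ (fun o' => xc b ℓ * w b o')) +
        xc b ℓ * w b o) :
    ∃ x : S.Profile → S.A,
      S.IsAgentChoice t x ∧ S.IsIIVCG t x ∧ S.LL t ∧ S.IR t x := by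
  obtain ⟨hψpos, ⟨a0, ha0⟩, hFpos, hF1, hVpos⟩ := hS
  have haff := S.exp_affine_aux hF1
  -- expected payment formula under any action
  have hExpT : ∀ b, ∀ ℓ, ∀ a, S.Exp a (t ℓ b) =
      (h ℓ b - S.Wel (astar b) (Function.update b ℓ (fun o' => xc b ℓ * w b o')))
        + xc b ℓ * S.Exp a (w b) := by
    intro b ℓ a
    have htf : t ℓ b = fun o =>
        (h ℓ b - S.Wel (astar b) (Function.update b ℓ (fun o' => xc b ℓ * w b o')))
          + xc b ℓ * w b o := funext fun o => ht ℓ b o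
    rw [htf, haff]
  -- welfare decomposition at the scaled payment
  have hWdec : ∀ b, S.InV b → ∀ ℓ,
      S.Wel (astar b) (Function.update b ℓ (fun o' => xc b ℓ * w b o'))
        = S.Wel (astar b) (Function.update b ℓ 0) + xc b ℓ * S.kval (astar b) := by
    intro b hb ℓ
    rw [S.wel_update_aux, S.exp_smul_aux, (hw b hb).2]
  -- key IIVCG payment identity
  have hK : ∀ b, S.InV b → ∀ ℓ, S.Exp (astar b) (t ℓ b) =
      h ℓ b - S.Wel (astar b) (Function.update b ℓ 0) := by
    intro b hb ℓ
    rw [hExpT b ℓ (astar b), hWdec b hb ℓ, (hw b hb).2]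
    ring
  -- agent's utility formula
  have hAU : ∀ b, S.InV b → ∀ a, S.agentU t b a =
      (∑ ℓ, (h ℓ b - S.Wel (astar b) (Function.update b ℓ (fun o' => xc b ℓ * w b o'))))
        + S.Exp a (w b) - S.ψ a := by
    intro b hb a
    obtain ⟨hx0, hx1, hx2⟩ := hxc b hb
    unfold CAS.agentU
    have hsum : (∑ ℓ, S.Exp a (t ℓ b)) =
        ∑ ℓ, ((h ℓ b - S.Wel (astar b) (Function.update b ℓ (fun o' => xc b ℓ * w b o')))
          + xc b ℓ * S.Exp a (w b)) :=
      Finset.sum_congr rfl fun ℓ _ => hExpT b ℓ a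
    rw [hsum, Finset.sum_add_distrib, ← Finset.sum_mul, hx1, one_mul]
  -- mval in terms of h
  have hmval : ∀ b ℓ, S.mval astar ℓ b = h ℓ b - S.Wel (astar b) (Function.update b ℓ 0) := by
    intro b ℓ
    unfold CAS.mval
    rw [hh]
  refine ⟨astar, ?_, ?_, ?_, ?_⟩
  · -- IsAgentChoice
    intro b hb
    refine ⟨fun a => ?_, fun a _ => ha b a⟩
    rw [hAU b hb a, hAU b hb (astar b)]
    have := (hw b hb).1.2 a
    linarith
  · -- IsIIVCG
    refine ⟨fun b _ a => ha b a, h, ?_, fun b hb ℓ => hK b hb ℓ⟩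
    intro ℓ b b' hbb'
    rw [hh, hh]
    have hfun : (fun v => S.maxWel (Function.update b ℓ v))
        = fun v => S.maxWel (Function.update b' ℓ v) := by
      funext v
      congr 1
      funext k
      rcases eq_or_ne k ℓ with rfl | hk
      · simp
      · simp [Function.update_of_ne hk, hbb' k hk]
    rw [hfun]
  · -- LL
    intro ℓ b hb o
    rw [ht]
    have hm := (hxc b hb).2.2 ℓ
    rw [hmval b ℓ] at hm
    have hw0 : 0 ≤ xc b ℓ * w b o := mul_nonneg ((hxc b hb).1 ℓ) ((hw b hb).1.1 o)
    rw [hWdec b hb ℓ]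
    linarith
  · -- IR
    intro ℓ b hb v hv
    set b' := Function.update b ℓ v with hb'def
    have hb' : S.InV b' := by
      intro k
      rcases eq_or_ne k ℓ with rfl | hk
      · simpa [hb'def] using hv
      · simpa [hb'def, Function.update_of_ne hk] using hb k
    have h1 : Function.update b' ℓ v = b' := by
      funext k
      rcases eq_or_ne k ℓ with rfl | hk
      · simp [hb'def]
      · simp [Function.update_of_ne hk]
    have hmax : ∀ u : S.Profile, S.maxWel u = S.Wel (astar u) u := fun u =>
      le_antisymm (Finset.sup'_le _ _ fun a _ => ha u a)
        (Finset.le_sup' (fun a => S.Wel a u) (Finset.mem_univ (astar u)))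
    have hle : h ℓ b' ≤ S.Wel (astar b') b' := by
      rw [hh]
      have hmem : S.Wel (astar b') b'
          ∈ (fun v0 => S.maxWel (Function.update b' ℓ v0)) '' S.V ℓ := by
        refine ⟨v, hv, ?_⟩
        show S.maxWel (Function.update b' ℓ v) = S.Wel (astar b') b'
        rw [h1, hmax]
      refine csInf_le ⟨0, ?_⟩ hmem
      rintro y ⟨v0, hv0, rfl⟩
      have hinV : S.InV (Function.update b' ℓ v0) := by
        intro k
        rcases eq_or_ne k ℓ with rfl | hk
        · simpa using hv0
        · simpa [Function.update_of_ne hk] using hb' k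
      have h0 : 0 ≤ S.Wel a0 (Function.update b' ℓ v0) := by
        unfold CAS.Wel
        rw [ha0]
        have hj : ∀ j, 0 ≤ S.Exp a0 (Function.update b' ℓ v0 j) := fun j =>
          Finset.sum_nonneg fun o _ => mul_nonneg (hFpos a0 o) (hVpos j _ (hinV j) o)
        have := Finset.sum_nonneg fun j (_ : j ∈ Finset.univ) => hj j
        linarith
      calc (0:ℝ) ≤ S.Wel a0 (Function.update b' ℓ v0) := h0
        _ ≤ S.maxWel (Function.update b' ℓ v0) :=
          Finset.le_sup' (fun a => S.Wel a (Function.update b' ℓ v0)) (Finset.mem_univ a0)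
    have hdec := S.wel_update_aux (astar b') b' ℓ v
    rw [h1] at hdec
    have hKb' := hK b' hb' ℓ
    unfold CAS.prinU
    have hsplit : S.Exp (astar b') (fun o => v o - t ℓ b' o)
        = S.Exp (astar b') v - S.Exp (astar b') (t ℓ b') := by
      unfold CAS.Exp
      rw [← Finset.sum_sub_distrib]
      exact Finset.sum_congr rfl fun o _ => by ring
    rw [hsplit, hKb']
    linarith
end

section
/- If a common agency setting with n ≥ 2 principals is such that all principals share the same expected value for each action — i.e., for every valuation profile v ∈ V, every action a, and all principals ℓ, k, E_{o∼F_a}[v^ℓ(o)] = E_{o∼F_a}[v^k(o)] — then there exists a correlation graph G for which the setting is G-correlated. -/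
namespace CAS

variable (S : CAS)

/-- A correlation graph on the `n` principals: edge weights `d(ℓ,k) ∈ [0,1]` with
`d(ℓ,ℓ) = 0` and weighted in-degree `Σ_k d(k,ℓ) = 1` for every `ℓ`. -/
def IsCorrGraph (d : Fin S.n → Fin S.n → ℝ) : Prop :=
  (∀ ℓ k, 0 ≤ d ℓ k ∧ d ℓ k ≤ 1) ∧ (∀ ℓ, d ℓ ℓ = 0) ∧ (∀ ℓ, ∑ k, d k ℓ = 1)

/-- The shifted valuation `û(o) = u(o) − min_{o'} u(o')`. -/
noncomputable def shift (u : S.O → ℝ) : S.O → ℝ :=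
  fun o => u o - Finset.univ.inf' Finset.univ_nonempty u

/-- The `G`-weighted valuation of principal `ℓ`: `b̂^ℓ_G = Σ_k d(ℓ,k)·b̂^k`. -/
noncomputable def gweight (d : Fin S.n → Fin S.n → ℝ) (b : S.Profile) (ℓ : Fin S.n) :
    S.O → ℝ :=
  fun o => ∑ k, d ℓ k * S.shift (b k) o

/-- The setting is `G`-correlated: replacing any principal's valuation by her
`G`-weighted valuation never increases the optimal welfare. -/
def GCorrelated (d : Fin S.n → Fin S.n → ℝ) : Prop :=
  ∀ ℓ, ∀ v, S.InV v →
    S.maxWel (Function.update v ℓ (S.gweight d v ℓ)) ≤ S.maxWel v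

end CAS

/-- If all principals share the same expected value for each action,
then there is a correlation graph `G` for which the setting is `G`-correlated. -/
theorem G_correlated_of_equal_expectations (S : CAS) (hS : S.Valid) (hn : 2 ≤ S.n)
    (hsame : ∀ v, S.InV v → ∀ a, ∀ ℓ k, S.Exp a (v ℓ) = S.Exp a (v k)) :
    ∃ d : Fin S.n → Fin S.n → ℝ, S.IsCorrGraph d ∧ S.GCorrelated d := by
  obtain ⟨hψ, -, hFpos, hFsum, hVpos⟩ := hS
  have hn1 : (1:ℝ) ≤ (S.n : ℝ) - 1 := by
    have : (2:ℝ) ≤ (S.n : ℝ) := by exact_mod_cast hn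
    linarith
  have hne : ((S.n : ℝ) - 1) ≠ 0 := by linarith
  set c : ℝ := ((S.n : ℝ) - 1)⁻¹ with hc
  have hc0 : 0 ≤ c := by
    rw [hc]; exact inv_nonneg.mpr (by linarith)
  have hc1 : c ≤ 1 := by
    rw [hc]; exact inv_le_one_of_one_le₀ hn1
  set d : Fin S.n → Fin S.n → ℝ := fun ℓ k => if k = ℓ then 0 else c with hd
  have hd0 : ∀ ℓ k, 0 ≤ d ℓ k := by
    intro ℓ k; rw [hd]; dsimp only; split <;> simp [hc0]
  have hsum : ∀ ℓ : Fin S.n, ∑ k, (if k = ℓ then (0:ℝ) else c) = 1 := by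
    intro ℓ
    have h1 : ∀ k : Fin S.n, (if k = ℓ then (0:ℝ) else c)
        = c - (if k = ℓ then c else 0) := by
      intro k; split <;> ring
    rw [Finset.sum_congr rfl fun k _ => h1 k, Finset.sum_sub_distrib,
      Finset.sum_const, Finset.sum_ite_eq' Finset.univ ℓ (fun _ => c)]
    simp only [Finset.mem_univ, if_true, Finset.card_univ, Fintype.card_fin,
      nsmul_eq_mul]
    rw [hc]
    field_simp
  have hrow : ∀ ℓ, ∑ k, d ℓ k = 1 := fun ℓ => hsum ℓ
  refine ⟨d, ⟨fun ℓ k => ⟨hd0 ℓ k, ?_⟩, fun ℓ => by simp [hd], fun ℓ => ?_⟩, ?_⟩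
  · rw [hd]; dsimp only; split
    · linarith
    · exact hc1
  · calc ∑ k, d k ℓ = ∑ k, (if k = ℓ then (0:ℝ) else c) := by
          apply Finset.sum_congr rfl; intro k _
          rw [hd]; dsimp only
          by_cases h : k = ℓ
          · simp [h]
          · rw [if_neg h, if_neg (fun e => h e.symm)]
      _ = 1 := hsum ℓ
  · -- G-correlated
    intro ℓ v hv
    set w := S.gweight d v ℓ with hw
    -- expectation of a shifted valuation
    have hshift : ∀ (a : S.A) (u : S.O → ℝ),
        S.Exp a (S.shift u) = S.Exp a u - Finset.univ.inf' Finset.univ_nonempty u := by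
      intro a u
      unfold CAS.Exp CAS.shift
      rw [show (∑ o, S.F a o * (u o - Finset.univ.inf' Finset.univ_nonempty u))
          = (∑ o, S.F a o * u o)
            - (∑ o, S.F a o) * Finset.univ.inf' Finset.univ_nonempty u by
        rw [Finset.sum_mul, ← Finset.sum_sub_distrib]
        exact Finset.sum_congr rfl fun o _ => by ring]
      rw [hFsum a]; ring
    have hminpos : ∀ k : Fin S.n,
        0 ≤ Finset.univ.inf' Finset.univ_nonempty (v k) := by
      intro k
      apply Finset.le_inf'
      intro o _
      exact hVpos k (v k) (hv k) o
    -- expectation of the weighted valuation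
    have hExpw : ∀ a : S.A, S.Exp a w ≤ S.Exp a (v ℓ) := by
      intro a
      have h1 : S.Exp a w = ∑ k, d ℓ k * S.Exp a (S.shift (v k)) := by
        rw [hw]; unfold CAS.Exp CAS.gweight
        simp only [Finset.mul_sum]
        rw [Finset.sum_comm]
        exact Finset.sum_congr rfl fun k _ =>
          Finset.sum_congr rfl fun o _ => by ring
      rw [h1]
      calc ∑ k, d ℓ k * S.Exp a (S.shift (v k))
          ≤ ∑ k, d ℓ k * S.Exp a (v ℓ) := by
            apply Finset.sum_le_sum
            intro k _
            apply mul_le_mul_of_nonneg_left _ (hd0 ℓ k)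
            rw [hshift a (v k), hsame v hv a k ℓ]
            linarith [hminpos k]
        _ = S.Exp a (v ℓ) := by rw [← Finset.sum_mul, hrow ℓ, one_mul]
    -- welfare comparison for each action
    have hWel : ∀ a : S.A, S.Wel a (Function.update v ℓ w) ≤ S.Wel a v := by
      intro a
      unfold CAS.Wel
      have hfun : (fun m => S.Exp a (Function.update v ℓ w m))
          = Function.update (fun m => S.Exp a (v m)) ℓ (S.Exp a w) := by
        funext m
        by_cases h : m = ℓ
        · subst h; simp
        · simp [Function.update_of_ne h]
      have h2 : ∑ m, S.Exp a (Function.update v ℓ w m)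
          = S.Exp a w + ∑ m ∈ Finset.univ.erase ℓ, S.Exp a (v m) := by
        calc ∑ m, S.Exp a (Function.update v ℓ w m)
            = ∑ m, Function.update (fun m => S.Exp a (v m)) ℓ (S.Exp a w) m := by
              rw [hfun]
          _ = S.Exp a w + ∑ m ∈ Finset.univ.erase ℓ, S.Exp a (v m) := by
              rw [← Finset.add_sum_erase _ _ (Finset.mem_univ ℓ)]
              congr 1
              · simp
              · exact Finset.sum_congr rfl fun m hm =>
                  Function.update_of_ne (Finset.ne_of_mem_erase hm) _ _
      have h3 : ∑ m, S.Exp a (v m)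
          = S.Exp a (v ℓ) + ∑ m ∈ Finset.univ.erase ℓ, S.Exp a (v m) :=
        (Finset.add_sum_erase _ _ (Finset.mem_univ ℓ)).symm
      rw [h2, h3]
      have := hExpw a
      linarith
    -- conclude on maxWel
    unfold CAS.maxWel
    apply Finset.sup'_le
    intro a _
    exact le_trans (hWel a) (Finset.le_sup' (fun a => S.Wel a v) (Finset.mem_univ a))
end

section
/- If a common agency setting with n ≥ 2 principals is such that every principal's valuation domain equals V^ℓ = [α,β]^m for reals 0 ≤ α ≤ β with β − α ≤ α, then there exists a correlation graph G for which the setting is G-correlated. -/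
/-- If every principal's valuation domain is `[α,β]^m` with
`β − α ≤ α`, then there is a correlation graph `G` for which the setting is
`G`-correlated. -/
theorem G_correlated_of_interval_domain (S : CAS) (hS : S.Valid) (hn : 2 ≤ S.n)
    (α β : ℝ) (hα : 0 ≤ α) (hαβ : α ≤ β) (hβα : β - α ≤ α)
    (hV : ∀ ℓ, S.V ℓ = { v : S.O → ℝ | ∀ o, α ≤ v o ∧ v o ≤ β }) :
    ∃ d : Fin S.n → Fin S.n → ℝ, S.IsCorrGraph d ∧ S.GCorrelated d := by
  obtain ⟨hψ, -, hF, hFsum, -⟩ := hS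
  have hn1 : (1:ℝ) ≤ (S.n:ℝ) - 1 := by
    have : (2:ℝ) ≤ (S.n:ℝ) := by exact_mod_cast hn
    linarith
  set c : ℝ := ((S.n : ℝ) - 1)⁻¹ with hc
  have hcpos : 0 < c := by
    apply inv_pos.mpr; linarith
  have hc1 : c ≤ 1 := by
    rw [hc]; exact inv_le_one_of_one_le₀ hn1
  have hswap : ∀ j k : Fin S.n, (if j = k then (0:ℝ) else c) = (if k = j then 0 else c) := by
    intro j k
    by_cases h : j = k
    · rw [if_pos h, if_pos h.symm]
    · rw [if_neg h, if_neg (fun hh => h hh.symm)]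
  have hsum : ∀ j : Fin S.n, ∑ k, (if k = j then (0:ℝ) else c) = 1 := by
    intro j
    have h1 : ∀ k : Fin S.n, (if k = j then (0:ℝ) else c) = c - (if k = j then c else 0) := by
      intro k; split <;> ring
    simp only [h1]
    rw [Finset.sum_sub_distrib, Finset.sum_const, Finset.sum_ite_eq']
    simp only [Finset.mem_univ, if_true, Finset.card_univ, Fintype.card_fin, nsmul_eq_mul]
    have hne : ((S.n : ℝ) - 1) ≠ 0 := by linarith
    field_simp [hc]
    rw [hc]; exact inv_mul_cancel₀ hne
  refine ⟨fun ℓ k => if k = ℓ then 0 else c, ⟨?_, ?_, ?_⟩, ?_⟩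
  · intro ℓ k
    dsimp only
    constructor <;> (split <;> linarith)
  · intro ℓ; simp
  · intro ℓ
    dsimp only
    rw [Finset.sum_congr rfl (fun k _ => hswap ℓ k)]
    exact hsum ℓ
  · intro ℓ v hv
    have hvk : ∀ k o, α ≤ v k o ∧ v k o ≤ β := by
      intro k o
      have := hv k
      rw [hV k] at this
      exact this o
    have hginf : ∀ k : Fin S.n, α ≤ Finset.univ.inf' Finset.univ_nonempty (v k) := by
      intro k
      apply Finset.le_inf'
      intro o _
      exact (hvk k o).1
    have hshift : ∀ k o, S.shift (v k) o ≤ β - α := by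
      intro k o
      unfold CAS.shift
      have h1 := (hvk k o).2
      have h2 := hginf k
      linarith
    have hg : ∀ o, S.gweight (fun ℓ k => if k = ℓ then 0 else c) v ℓ o ≤ v ℓ o := by
      intro o
      have hb : S.gweight (fun ℓ k => if k = ℓ then 0 else c) v ℓ o ≤ β - α := by
        unfold CAS.gweight
        dsimp only
        calc ∑ k, (if k = ℓ then (0:ℝ) else c) * S.shift (v k) o
            ≤ ∑ k, (if k = ℓ then (0:ℝ) else c) * (β - α) := by
              apply Finset.sum_le_sum
              intro k _
              apply mul_le_mul_of_nonneg_left (hshift k o)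
              split
              · exact le_refl 0
              · exact le_of_lt hcpos
          _ = (∑ k, (if k = ℓ then (0:ℝ) else c)) * (β - α) := (Finset.sum_mul _ _ _).symm
          _ = β - α := by rw [hsum ℓ, one_mul]
      have := (hvk ℓ o).1
      linarith
    have hWel : ∀ a, S.Wel a (Function.update v ℓ
        (S.gweight (fun ℓ k => if k = ℓ then 0 else c) v ℓ)) ≤ S.Wel a v := by
      intro a
      unfold CAS.Wel
      have : ∑ ℓ', S.Exp a (Function.update v ℓ
          (S.gweight (fun ℓ k => if k = ℓ then 0 else c) v ℓ) ℓ') ≤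
          ∑ ℓ', S.Exp a (v ℓ') := by
        apply Finset.sum_le_sum
        intro ℓ' _
        by_cases h : ℓ' = ℓ
        · subst h
          rw [Function.update_self]
          unfold CAS.Exp
          apply Finset.sum_le_sum
          intro o _
          exact mul_le_mul_of_nonneg_left (hg o) (hF a o)
        · rw [Function.update_of_ne h]
      linarith
    unfold CAS.maxWel
    apply Finset.sup'_le
    intro a _
    exact le_trans (hWel a) (Finset.le_sup' (fun a => S.Wel a v) (Finset.mem_univ a))
end

section
/- For every correlation graph G, the G-Weighted contract, defined by t^ℓ(b,o) = Wel^{a*(b^{-ℓ},b̂^ℓ_G)}(b^{-ℓ},b̂^ℓ_G) − Wel^{a*(b)}(b^{-ℓ},b̂^ℓ_G) + b̂^ℓ_G(o) for every principal ℓ, bid profile b ∈ V and outcome o, is an IIVCG contract. -/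
/-- For every correlation graph `G`, the `G`-Weighted contract
`t^ℓ(b,o) = Wel^{a*(b^{−ℓ},b̂^ℓ_G)}(b^{−ℓ},b̂^ℓ_G) − Wel^{a*(b)}(b^{−ℓ},b̂^ℓ_G) + b̂^ℓ_G(o)`
is an IIVCG contract. -/
theorem G_weighted_is_IIVCG (S : CAS) (hS : S.Valid)
    (d : Fin S.n → Fin S.n → ℝ) (hd : S.IsCorrGraph d)
    (astar : S.Profile → S.A) (ha : S.IsMaxSelection astar)
    (t : S.Contract)
    (ht : ∀ ℓ b o, t ℓ b o =
      S.Wel (astar (Function.update b ℓ (S.gweight d b ℓ)))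
          (Function.update b ℓ (S.gweight d b ℓ)) -
        S.Wel (astar b) (Function.update b ℓ (S.gweight d b ℓ)) +
        S.gweight d b ℓ o) :
    ∃ x : S.Profile → S.A, S.IsAgentChoice t x ∧ S.IsIIVCG t x := by
  obtain ⟨hψ0, hψex, hFpos, hF1, hVpos⟩ := hS
  obtain ⟨hd01, hdiag, hcol⟩ := hd
  -- basic expectation lemmas
  have hExp_const : ∀ (a : S.A) (c : ℝ), S.Exp a (fun _ => c) = c := by
    intro a c
    simp only [CAS.Exp]
    rw [← Finset.sum_mul, hF1 a, one_mul]
  have hExp_zero : ∀ (a : S.A), S.Exp a 0 = 0 := by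
    intro a; exact hExp_const a 0
  -- the constant part of the payment
  set C : Fin S.n → S.Profile → ℝ := fun ℓ b =>
    S.Wel (astar (Function.update b ℓ (S.gweight d b ℓ)))
        (Function.update b ℓ (S.gweight d b ℓ)) -
      S.Wel (astar b) (Function.update b ℓ (S.gweight d b ℓ)) with hC
  have hExp_t : ∀ (a : S.A) ℓ b, S.Exp a (t ℓ b) = C ℓ b + S.Exp a (S.gweight d b ℓ) := by
    intro a ℓ b
    have h1 : t ℓ b = fun o => C ℓ b + S.gweight d b ℓ o := funext fun o => ht ℓ b o
    rw [h1]
    simp only [CAS.Exp, mul_add, Finset.sum_add_distrib]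
    rw [← Finset.sum_mul, hF1 a, one_mul]
  -- sum over principals of weighted-bid expectations
  have hsum_g : ∀ (a : S.A) (b : S.Profile),
      ∑ ℓ, S.Exp a (S.gweight d b ℓ) = ∑ k, S.Exp a (S.shift (b k)) := by
    intro a b
    simp only [CAS.Exp, CAS.gweight]
    calc ∑ ℓ, ∑ o, S.F a o * ∑ k, d ℓ k * S.shift (b k) o
        = ∑ o, ∑ ℓ, ∑ k, d ℓ k * (S.F a o * S.shift (b k) o) := by
          rw [Finset.sum_comm]
          refine Finset.sum_congr rfl fun o _ => Finset.sum_congr rfl fun ℓ _ => ?_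
          rw [Finset.mul_sum]; exact Finset.sum_congr rfl fun k _ => by ring
      _ = ∑ o, ∑ k, ∑ ℓ, d ℓ k * (S.F a o * S.shift (b k) o) :=
          Finset.sum_congr rfl fun o _ => Finset.sum_comm
      _ = ∑ o, ∑ k, S.F a o * S.shift (b k) o := by
          refine Finset.sum_congr rfl fun o _ => Finset.sum_congr rfl fun k _ => ?_
          rw [← Finset.sum_mul, hcol k, one_mul]
      _ = ∑ k, ∑ o, S.F a o * S.shift (b k) o := Finset.sum_comm
  have hExp_shift : ∀ (a : S.A) (u : S.O → ℝ),
      S.Exp a (S.shift u) = S.Exp a u - Finset.univ.inf' Finset.univ_nonempty u := by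
    intro a u
    simp only [CAS.Exp, CAS.shift, mul_sub, Finset.sum_sub_distrib]
    rw [← Finset.sum_mul, hF1 a, one_mul]
  -- the agent's utility is welfare plus a constant
  have key : ∀ (b : S.Profile) (a : S.A), S.agentU t b a =
      S.Wel a b + ((∑ ℓ, C ℓ b) - ∑ k, Finset.univ.inf' Finset.univ_nonempty (b k)) := by
    intro b a
    simp only [CAS.agentU, CAS.Wel]
    rw [Finset.sum_congr rfl fun ℓ _ => hExp_t a ℓ b, Finset.sum_add_distrib, hsum_g,
      Finset.sum_congr rfl fun k (_ : k ∈ Finset.univ) => hExp_shift a (b k),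
      Finset.sum_sub_distrib]
    simp only [Finset.sum_sub_distrib]
    ring
  -- welfare after an update splits off the updated expectation
  have hWelUpd : ∀ (a : S.A) (b : S.Profile) (ℓ : Fin S.n) (u : S.O → ℝ),
      S.Wel a (Function.update b ℓ u) = S.Wel a (Function.update b ℓ 0) + S.Exp a u := by
    intro a b ℓ u
    have hgen : ∀ (v : S.O → ℝ), ∑ ℓ', S.Exp a (Function.update b ℓ v ℓ') =
        S.Exp a v + ∑ ℓ' ∈ Finset.univ \ {ℓ}, S.Exp a (b ℓ') := by
      intro v
      have hfun : (fun ℓ' => S.Exp a (Function.update b ℓ v ℓ')) =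
          Function.update (fun ℓ' => S.Exp a (b ℓ')) ℓ (S.Exp a v) := by
        funext ℓ'
        by_cases h : ℓ' = ℓ
        · subst h; simp
        · simp [Function.update_of_ne h]
      rw [hfun, Finset.sum_update_of_mem (Finset.mem_univ ℓ)]
    simp only [CAS.Wel]
    rw [hgen u, hgen 0, hExp_zero a]
    ring
  refine ⟨astar, ?_, ?_, ?_⟩
  · -- agent choice
    intro b _
    refine ⟨?_, ?_⟩
    · intro a
      rw [key b a, key b (astar b)]
      have := ha b a
      linarith
    · intro a _
      exact ha b a
  · intro b _ a
    exact ha b a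
  · refine ⟨fun ℓ b => S.Wel (astar (Function.update b ℓ (S.gweight d b ℓ)))
      (Function.update b ℓ (S.gweight d b ℓ)), ?_, ?_⟩
    · intro ℓ b b' hbb
      have hg : S.gweight d b ℓ = S.gweight d b' ℓ := by
        funext o
        simp only [CAS.gweight]
        apply Finset.sum_congr rfl
        intro k _
        by_cases h : k = ℓ
        · subst h; simp [hdiag]
        · rw [hbb k h]
      have hupd : Function.update b ℓ (S.gweight d b ℓ) =
          Function.update b' ℓ (S.gweight d b' ℓ) := by
        funext k
        by_cases h : k = ℓ
        · subst h; simp [hg]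
        · simp [Function.update_of_ne h, hbb k h]
      show S.Wel (astar (Function.update b ℓ (S.gweight d b ℓ)))
          (Function.update b ℓ (S.gweight d b ℓ)) =
        S.Wel (astar (Function.update b' ℓ (S.gweight d b' ℓ)))
          (Function.update b' ℓ (S.gweight d b' ℓ))
      rw [hupd]
    · intro b _ ℓ
      rw [hExp_t (astar b) ℓ b, hC]
      have := hWelUpd (astar b) b ℓ (S.gweight d b ℓ)
      show S.Wel (astar (Function.update b ℓ (S.gweight d b ℓ)))
            (Function.update b ℓ (S.gweight d b ℓ)) -
          S.Wel (astar b) (Function.update b ℓ (S.gweight d b ℓ)) +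
          S.Exp (astar b) (S.gweight d b ℓ) =
        S.Wel (astar (Function.update b ℓ (S.gweight d b ℓ)))
          (Function.update b ℓ (S.gweight d b ℓ)) -
          S.Wel (astar b) (Function.update b ℓ 0)
      linarith
end

section
/- For every correlation graph G, the G-Weighted contract, defined by t^ℓ(b,o) = Wel^{a*(b^{-ℓ},b̂^ℓ_G)}(b^{-ℓ},b̂^ℓ_G) − Wel^{a*(b)}(b^{-ℓ},b̂^ℓ_G) + b̂^ℓ_G(o), satisfies limited liability: t^ℓ(b,o) ≥ 0 for every principal ℓ, every bid profile b ∈ V, and every outcome o. -/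
/-- For every correlation graph `G`, the `G`-Weighted contract
satisfies limited liability. -/
theorem G_weighted_is_LL (S : CAS) (hS : S.Valid)
    (d : Fin S.n → Fin S.n → ℝ) (hd : S.IsCorrGraph d)
    (astar : S.Profile → S.A) (ha : S.IsMaxSelection astar)
    (t : S.Contract)
    (ht : ∀ ℓ b o, t ℓ b o =
      S.Wel (astar (Function.update b ℓ (S.gweight d b ℓ)))
          (Function.update b ℓ (S.gweight d b ℓ)) -
        S.Wel (astar b) (Function.update b ℓ (S.gweight d b ℓ)) +
        S.gweight d b ℓ o) :
    S.LL t := by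
  intro ℓ b hb o
  rw [ht]
  have h1 := ha (Function.update b ℓ (S.gweight d b ℓ)) (astar b)
  have h2 : 0 ≤ S.gweight d b ℓ o := by
    apply Finset.sum_nonneg
    intro k _
    apply mul_nonneg (hd.1 ℓ k).1
    simp only [CAS.shift, sub_nonneg]
    exact Finset.inf'_le _ (Finset.mem_univ o)
  linarith
end

section
/- For every correlation graph G, the G-Weighted contract, defined by t^ℓ(b,o) = Wel^{a*(b^{-ℓ},b̂^ℓ_G)}(b^{-ℓ},b̂^ℓ_G) − Wel^{a*(b)}(b^{-ℓ},b̂^ℓ_G) + b̂^ℓ_G(o), satisfies individual rationality if and only if the setting is G-correlated. -/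
/-- For every correlation graph `G`, the `G`-Weighted contract
satisfies individual rationality iff the setting is `G`-correlated. (For the
`G`-Weighted contract the agent's choice satisfies `x*(b) = a*(b)`, so `astar` is used
as the agent's action.) -/
theorem G_weighted_IR_iff_G_correlated (S : CAS) (hS : S.Valid)
    (d : Fin S.n → Fin S.n → ℝ) (hd : S.IsCorrGraph d)
    (astar : S.Profile → S.A) (ha : S.IsMaxSelection astar)
    (t : S.Contract)
    (ht : ∀ ℓ b o, t ℓ b o =
      S.Wel (astar (Function.update b ℓ (S.gweight d b ℓ)))
          (Function.update b ℓ (S.gweight d b ℓ)) -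
        S.Wel (astar b) (Function.update b ℓ (S.gweight d b ℓ)) +
        S.gweight d b ℓ o)
    (hx : S.IsAgentChoice t astar) :
    S.IR t astar ↔ S.GCorrelated d := by
  have hF1 : ∀ a, ∑ o, S.F a o = 1 := hS.2.2.2.1
  have hExp_sub : ∀ a (u w : S.O → ℝ),
      S.Exp a (fun o => u o - w o) = S.Exp a u - S.Exp a w := by
    intro a u w
    simp [CAS.Exp, mul_sub, Finset.sum_sub_distrib]
  have hExp_const_add : ∀ a (c : ℝ) (w : S.O → ℝ),
      S.Exp a (fun o => c + w o) = c + S.Exp a w := by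
    intro a c w
    simp [CAS.Exp, mul_add, Finset.sum_add_distrib, ← Finset.sum_mul, hF1]
  have hmaxWel : ∀ u, S.maxWel u = S.Wel (astar u) u := by
    intro u
    refine le_antisymm (Finset.sup'_le _ _ fun a _ => ha u a) ?_
    exact Finset.le_sup' (fun a => S.Wel a u) (Finset.mem_univ _)
  have hWel_update : ∀ a (b : S.Profile) ℓ w,
      S.Wel a (Function.update b ℓ w) = S.Wel a b - S.Exp a (b ℓ) + S.Exp a w := by
    intro a b ℓ w
    unfold CAS.Wel
    rw [show (fun k => S.Exp a (Function.update b ℓ w k)) =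
        Function.update (fun k => S.Exp a (b k)) ℓ (S.Exp a w) from
      funext (Function.apply_update (fun _ u => S.Exp a u) b ℓ w),
      Finset.sum_update_of_mem (Finset.mem_univ ℓ),
      ← Finset.add_sum_erase Finset.univ (fun k => S.Exp a (b k)) (Finset.mem_univ ℓ),
      Finset.sdiff_singleton_eq_erase]
    ring
  have hkey : ∀ (b : S.Profile) ℓ,
      S.prinU t astar ℓ (b ℓ) b
        = S.maxWel b - S.maxWel (Function.update b ℓ (S.gweight d b ℓ)) := by
    intro b ℓ
    set g := S.gweight d b ℓ with hg
    set bh := Function.update b ℓ g with hbh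
    set x := astar b with hxb
    have htℓ : t ℓ b = fun o =>
        (S.Wel (astar bh) bh - S.Wel x bh) + g o := by
      funext o
      rw [ht ℓ b o]
    have h1 : S.prinU t astar ℓ (b ℓ) b = S.Exp x (b ℓ) - S.Exp x (t ℓ b) := by
      unfold CAS.prinU
      rw [hExp_sub]
    have h2 : S.Exp x (t ℓ b) =
        (S.Wel (astar bh) bh - S.Wel x bh) + S.Exp x g := by
      rw [htℓ, hExp_const_add]
    have h3 : S.Wel x bh = S.Wel x b - S.Exp x (b ℓ) + S.Exp x g :=
      hWel_update x b ℓ g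
    have h4 : S.maxWel bh = S.Wel (astar bh) bh := hmaxWel bh
    have h5 : S.maxWel b = S.Wel x b := hmaxWel b
    rw [h1, h2, h3, h4, h5]
    ring
  constructor
  · intro hIR ℓ v hv
    have h := hIR ℓ v hv (v ℓ) (hv ℓ)
    rw [Function.update_eq_self, hkey v ℓ] at h
    linarith
  · intro hG ℓ b hb v hv
    set b' := Function.update b ℓ v with hb'
    have hInV : S.InV b' := by
      intro k
      by_cases hk : k = ℓ
      · subst hk; simpa [hb'] using hv
      · simpa [hb', Function.update_of_ne hk] using hb k
    have hvℓ : b' ℓ = v := Function.update_self ℓ v b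
    have h := hkey b' ℓ
    rw [hvℓ] at h
    rw [h]
    have := hG ℓ b' hInV
    linarith
end

section
/- Price of anarchy of first price contracts: in the described setting, consider the bid profile b with b^1 = (0,0,1+γ), b^2 = (0,1+ε,0), and b^ℓ = (0,0,0) for every ℓ > 2. Then: (i) the agent's chosen action is x*(b) = a_3; (ii) b is an equilibrium, i.e., for every principal ℓ and every deviation b̃^ℓ ∈ V^ℓ, principal ℓ's expected utility E_{o∼F_{x*(b^{-ℓ},b̃^ℓ)}}[v^ℓ(o) − b̃^ℓ(o)] is at most E_{o∼F_{x*(b)}}[v^ℓ(o) − b^ℓ(o)]; and (iii) the equilibrium welfare is Wel^{a_3}(v) = 1 while the optimal welfare is Wel^{a_1}(v) = n − 2, so this equilibrium achieves only a 1/(n−2) fraction of the optimal welfare. -/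
/-- The price-of-anarchy example: three actions (`a_i` = index `i−1`) with costs
`0, ε, γ`, three outcomes (`o_i` = index `i−1`), action `a_i` deterministically yields
outcome `o_i`, and `N > 3` principals with the one-dimensional domains described in the
example. -/
noncomputable abbrev poaSetting (N : ℕ) (ε γ : ℝ) : CAS where
  A := Fin 3
  O := Fin 3
  n := N
  ψ := fun a => if a = 0 then 0 else if a = 1 then ε else γ
  F := fun a o => if (a : ℕ) = (o : ℕ) then 1 else 0
  V := fun ℓ =>
    if (ℓ : ℕ) = 0 then { v | v 0 = 0 ∧ v 1 = 0 ∧ 0 ≤ v 2 }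
    else if (ℓ : ℕ) = 1 then { v | v 0 = 0 ∧ 0 ≤ v 1 ∧ v 2 = 0 }
    else { v | 0 ≤ v 0 ∧ v 1 = 0 ∧ v 2 = 0 }

/-- The agent's full tie-breaking rule: `x` maximizes the agent's expected utility;
among utility-maximizing actions it maximizes the declared welfare; and among those it
takes a maximal-cost action. -/
def CAS.IsAgentChoiceCost (S : CAS) (t : S.Contract) (x : S.Profile → S.A) : Prop :=
  S.IsAgentChoice t x ∧
    ∀ b, S.InV b → ∀ a, S.agentU t b a = S.agentU t b (x b) →
      S.Wel a b = S.Wel (x b) b → S.ψ a ≤ S.ψ (x b)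

private lemma poa_exp (N : ℕ) (ε γ : ℝ) (a : Fin 3) (u : Fin 3 → ℝ) :
    (poaSetting N ε γ).Exp a u = u a := by
  show ∑ o : Fin 3, (if (a:ℕ) = (o:ℕ) then (1:ℝ) else 0) * u o = u a
  fin_cases a <;> simp [Fin.sum_univ_three]

private lemma poa_psi (N : ℕ) (ε γ : ℝ) :
    (poaSetting N ε γ).ψ 0 = 0 ∧ (poaSetting N ε γ).ψ 1 = ε ∧ (poaSetting N ε γ).ψ 2 = γ := by
  refine ⟨rfl, rfl, rfl⟩

private lemma sum_two {N : ℕ} (hN : 1 < N) (f : Fin N → ℝ)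
    (hf : ∀ k : Fin N, 2 ≤ (k : ℕ) → f k = 0) :
    ∑ k, f k = f ⟨0, by omega⟩ + f ⟨1, by omega⟩ := by
  classical
  rw [← Finset.sum_subset (Finset.subset_univ ({⟨0, by omega⟩, ⟨1, by omega⟩} : Finset (Fin N)))
    (fun x _ hx => hf x (by
      simp only [Finset.mem_insert, Finset.mem_singleton] at hx
      push_neg at hx
      have h1 : (x:ℕ) ≠ 0 := fun h => hx.1 (Fin.ext h)
      have h2 : (x:ℕ) ≠ 1 := fun h => hx.2 (Fin.ext h)
      omega))]
  rw [Finset.sum_pair (by simp [Fin.ext_iff])]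

private lemma sum_three {N : ℕ} (hN : 1 < N) (ℓ : Fin N) (hℓ : 2 ≤ (ℓ : ℕ)) (f : Fin N → ℝ)
    (hf : ∀ k : Fin N, 2 ≤ (k : ℕ) → k ≠ ℓ → f k = 0) :
    ∑ k, f k = f ⟨0, by omega⟩ + f ⟨1, by omega⟩ + f ℓ := by
  classical
  rw [← Finset.sum_subset
      (Finset.subset_univ ({⟨0, by omega⟩, ⟨1, by omega⟩, ℓ} : Finset (Fin N)))
    (fun x _ hx => by
      simp only [Finset.mem_insert, Finset.mem_singleton] at hx
      push_neg at hx
      exact hf x (by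
        have h1 : (x:ℕ) ≠ 0 := fun h => hx.1 (Fin.ext h)
        have h2 : (x:ℕ) ≠ 1 := fun h => hx.2.1 (Fin.ext h)
        omega) hx.2.2)]
  rw [Finset.sum_insert (by simp [Fin.ext_iff]; omega),
      Finset.sum_insert (by simp [Fin.ext_iff]; omega),
      Finset.sum_singleton, add_assoc]

private lemma fin3_cases (a : Fin 3) : a = 0 ∨ a = 1 ∨ a = 2 := by omega

/-- Price of anarchy of first price contracts: under the first price
contract, at the bid profile `b^1 = (0,0,1+γ)`, `b^2 = (0,1+ε,0)`, `b^ℓ = (0,0,0)` for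
`ℓ > 2`: (i) the agent chooses `x*(b) = a_3`; (ii) `b` is an equilibrium; and (iii) the
equilibrium welfare is `Wel^{a_3}(v) = 1` while the optimal welfare is
`Wel^{a_1}(v) = N − 2`. -/
theorem first_price_PoA (N : ℕ) (hN : 3 < N) (ε γ : ℝ)
    (hε : 0 < ε) (hεγ : ε < γ) (hγ : γ < 1)
    (v b : (poaSetting N ε γ).Profile)
    (hv : ∀ ℓ, v ℓ =
      if (ℓ : ℕ) = 0 then (fun o : Fin 3 => if (o : ℕ) = 2 then 1 + γ else 0)
      else if (ℓ : ℕ) = 1 then (fun o : Fin 3 => if (o : ℕ) = 1 then 1 + ε else 0)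
      else (fun o : Fin 3 => if (o : ℕ) = 0 then 1 else 0))
    (hb : ∀ ℓ, b ℓ =
      if (ℓ : ℕ) = 0 then (fun o : Fin 3 => if (o : ℕ) = 2 then 1 + γ else 0)
      else if (ℓ : ℕ) = 1 then (fun o : Fin 3 => if (o : ℕ) = 1 then 1 + ε else 0)
      else 0)
    (t : (poaSetting N ε γ).Contract) (ht : ∀ ℓ b' o, t ℓ b' o = b' ℓ o)
    (x : (poaSetting N ε γ).Profile → (poaSetting N ε γ).A)
    (hx : (poaSetting N ε γ).IsAgentChoiceCost t x) :
    x b = 2 ∧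
    (∀ ℓ, ∀ bt ∈ (poaSetting N ε γ).V ℓ,
      (poaSetting N ε γ).Exp (x (Function.update b ℓ bt)) (fun o => v ℓ o - bt o) ≤
        (poaSetting N ε γ).Exp (x b) (fun o => v ℓ o - b ℓ o)) ∧
    (poaSetting N ε γ).Wel 2 v = 1 ∧ (poaSetting N ε γ).Wel 0 v = (N : ℝ) - 2 := by
  have h1N : 1 < N := by omega
  set i0 : Fin N := ⟨0, by omega⟩ with hi0
  set i1 : Fin N := ⟨1, by omega⟩ with hi1
  -- basic computation lemmas
  have hAU : ∀ (b' : (poaSetting N ε γ).Profile) (a : Fin 3),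
      (poaSetting N ε γ).agentU t b' a = (∑ k, b' k a) - (poaSetting N ε γ).ψ a := by
    intro b' a
    unfold CAS.agentU
    congr 1
    refine Finset.sum_congr rfl fun k _ => ?_
    rw [poa_exp, ht]
  have hWelU : ∀ (b' : (poaSetting N ε γ).Profile) (a : Fin 3),
      (poaSetting N ε γ).Wel a b' = (∑ k, b' k a) - (poaSetting N ε γ).ψ a := by
    intro b' a
    unfold CAS.Wel
    congr 1
    exact Finset.sum_congr rfl fun k _ => poa_exp N ε γ a (b' k)
  have hVmem : ∀ (k : Fin N) (w : Fin 3 → ℝ), w ∈ (poaSetting N ε γ).V k ↔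
      (if (k:ℕ) = 0 then w 0 = 0 ∧ w 1 = 0 ∧ 0 ≤ w 2
       else if (k:ℕ) = 1 then w 0 = 0 ∧ 0 ≤ w 1 ∧ w 2 = 0
       else 0 ≤ w 0 ∧ w 1 = 0 ∧ w 2 = 0) := by
    intro k w
    show w ∈ (if (k:ℕ) = 0 then _ else if (k:ℕ) = 1 then _ else _) ↔ _
    split_ifs <;> rfl
  have hbval : ∀ (k : Fin N) (o : Fin 3), b k o =
      if (k:ℕ) = 0 then (if (o:ℕ) = 2 then 1 + γ else 0)
      else if (k:ℕ) = 1 then (if (o:ℕ) = 1 then 1 + ε else 0) else 0 := by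
    intro k o
    rw [hb k]
    by_cases h0 : (k:ℕ) = 0 <;> by_cases h1 : (k:ℕ) = 1 <;> simp [h0, h1]
  have hvval : ∀ (k : Fin N) (o : Fin 3), v k o =
      if (k:ℕ) = 0 then (if (o:ℕ) = 2 then 1 + γ else 0)
      else if (k:ℕ) = 1 then (if (o:ℕ) = 1 then 1 + ε else 0)
      else (if (o:ℕ) = 0 then 1 else 0) := by
    intro k o
    rw [hv k]
    by_cases h0 : (k:ℕ) = 0 <;> by_cases h1 : (k:ℕ) = 1 <;> simp [h0, h1]
  have hInV : (poaSetting N ε γ).InV b := by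
    intro k
    rw [hVmem]
    by_cases h0 : (k:ℕ) = 0 <;> by_cases h1 : (k:ℕ) = 1 <;>
      simp [h0, h1, hbval] <;> linarith
  -- the sum of the bids at each outcome
  have hsumb : ∀ o : Fin 3, ∑ k : Fin N, b k o =
      (if (o:ℕ) = 2 then 1 + γ else 0) + (if (o:ℕ) = 1 then 1 + ε else 0) := by
    intro o
    rw [sum_two h1N _ (fun k hk => by
      rw [hbval]
      simp [show (k:ℕ) ≠ 0 by omega, show (k:ℕ) ≠ 1 by omega])]
    rw [hbval, hbval]
    simp
  -- agent utilities at b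
  have hA0 : (poaSetting N ε γ).agentU t b 0 = 0 := by
    rw [hAU, hsumb]; simp
  have hA1 : (poaSetting N ε γ).agentU t b 1 = 1 := by
    rw [hAU, hsumb]
    have : (poaSetting N ε γ).ψ 1 = ε := rfl
    rw [this]; norm_num
  have hA2 : (poaSetting N ε γ).agentU t b 2 = 1 := by
    rw [hAU, hsumb]
    have : (poaSetting N ε γ).ψ 2 = γ := rfl
    rw [this]; norm_num
  have hmax := (hx.1 b hInV).1
  -- part (i)
  have hxb : x b = 2 := by
    have hub : (poaSetting N ε γ).agentU t b (x b) = 1 := by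
      rcases fin3_cases (x b) with h | h | h <;> rw [h]
      · exfalso; have := hmax 1; rw [hA1, h, hA0] at this; linarith
      · exact hA1
      · exact hA2
    rcases fin3_cases (x b) with h | h | h
    · exfalso; rw [h, hA0] at hub; linarith
    · exfalso
      have hcost := hx.2 b hInV 2 (by rw [hub, hA2]) (by
        have e : ∀ a : Fin 3, (poaSetting N ε γ).Wel a b = (poaSetting N ε γ).agentU t b a :=
          fun a => by rw [hWelU, hAU]
        rw [e, e, hub, hA2])
      rw [h] at hcost
      have h2 : (poaSetting N ε γ).ψ 2 = γ := rfl
      have h1 : (poaSetting N ε γ).ψ 1 = ε := rfl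
      rw [h1, h2] at hcost
      linarith
    · exact h
  refine ⟨hxb, ?_, ?_, ?_⟩
  · -- part (ii) : equilibrium
    intro ℓ bt hbt
    set b' := Function.update b ℓ bt with hb'
    have hb'val : ∀ k : Fin N, b' k = if k = ℓ then bt else b k := by
      intro k; rw [hb', Function.update_apply]
    have hInV' : (poaSetting N ε γ).InV b' := by
      intro k
      rw [hb'val]
      split_ifs with h
      · rw [h]; exact hbt
      · exact hInV k
    have hmax' := (hx.1 b' hInV').1
    -- RHS equals 0
    have hRHS : (poaSetting N ε γ).Exp (x b) (fun o => v ℓ o - b ℓ o) = 0 := by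
      rw [poa_exp, hxb, hvval, hbval]
      by_cases h0 : (ℓ:ℕ) = 0 <;> by_cases h1 : (ℓ:ℕ) = 1 <;> simp [h0, h1]
    rw [hRHS, poa_exp]
    rw [hVmem] at hbt
    by_cases h0 : (ℓ:ℕ) = 0
    · have hl : ℓ = i0 := Fin.ext h0
      rw [h0] at hbt; simp only [if_pos rfl] at hbt
      obtain ⟨e0, e1, e2⟩ := hbt
      have hsum' : ∀ o : Fin 3, ∑ k : Fin N, b' k o = bt o + b i1 o := by
        intro o
        rw [sum_two h1N _ (fun k hk => by
          rw [hb'val]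
          rw [if_neg (by rw [hl]; exact fun h => by simp [hi0] at h; omega)]
          rw [hbval]
          simp [show (k:ℕ) ≠ 0 by omega, show (k:ℕ) ≠ 1 by omega])]
        rw [hb'val, hb'val, if_pos hl.symm, if_neg (by rw [hl]; simp [hi0, hi1, Fin.ext_iff])]
      have hA2' : (poaSetting N ε γ).agentU t b' 2 = bt 2 - γ := by
        rw [hAU, hsum' 2, hbval]
        have : (poaSetting N ε γ).ψ 2 = γ := rfl
        rw [this]; simp [hi1]
      have hA1' : (poaSetting N ε γ).agentU t b' 1 = 1 := by
        rw [hAU, hsum' 1, hbval]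
        have : (poaSetting N ε γ).ψ 1 = ε := rfl
        rw [this]; norm_num [hi1, e1]
      rcases fin3_cases (x b') with h | h | h <;> rw [h] <;> rw [hvval, h0]
      · simp [e0]
      · simp [e1]
      · have := hmax' 1
        rw [hA1', h, hA2'] at this
        simp only [if_pos rfl]
        norm_num
        linarith
    · by_cases h1 : (ℓ:ℕ) = 1
      · have hl : ℓ = i1 := Fin.ext h1
        rw [h1] at hbt; norm_num at hbt
        obtain ⟨e0, e1, e2⟩ := hbt
        have hsum' : ∀ o : Fin 3, ∑ k : Fin N, b' k o = b i0 o + bt o := by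
          intro o
          rw [sum_two h1N _ (fun k hk => by
            rw [hb'val]
            rw [if_neg (by rw [hl]; exact fun h => by simp [hi1] at h; omega)]
            rw [hbval]
            simp [show (k:ℕ) ≠ 0 by omega, show (k:ℕ) ≠ 1 by omega])]
          rw [hb'val, hb'val, if_pos hl.symm, if_neg (by rw [hl]; simp [hi0, hi1, Fin.ext_iff])]
        have hA2' : (poaSetting N ε γ).agentU t b' 2 = 1 := by
          rw [hAU, hsum' 2, hbval]
          have : (poaSetting N ε γ).ψ 2 = γ := rfl
          rw [this]; simp [hi0, e2]
        have hA1' : (poaSetting N ε γ).agentU t b' 1 = bt 1 - ε := by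
          rw [hAU, hsum' 1, hbval]
          have : (poaSetting N ε γ).ψ 1 = ε := rfl
          rw [this]; simp [hi0]
        rcases fin3_cases (x b') with h | h | h <;> rw [h, hvval] <;>
          simp only [if_neg h0, if_pos h1]
        · simp [e0]
        · have := hmax' 2
          rw [hA2', h, hA1'] at this
          norm_num
          linarith
        · simp [e2]
      · -- ℓ ≥ 2
        have h2 : 2 ≤ (ℓ:ℕ) := by omega
        rw [if_neg h0, if_neg h1] at hbt
        obtain ⟨e0, e1, e2⟩ := hbt
        have hsum' : ∀ o : Fin 3, ∑ k : Fin N, b' k o = b i0 o + b i1 o + bt o := by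
          intro o
          rw [sum_three h1N ℓ h2 _ (fun k hk hkl => by
            rw [hb'val, if_neg hkl, hbval]
            simp [show (k:ℕ) ≠ 0 by omega, show (k:ℕ) ≠ 1 by omega])]
          rw [hb'val, hb'val, hb'val, if_pos rfl,
            if_neg (by simp [hi0, Fin.ext_iff]; omega),
            if_neg (by simp [hi1, Fin.ext_iff]; omega)]
        have hA0' : (poaSetting N ε γ).agentU t b' 0 = bt 0 := by
          rw [hAU, hsum' 0, hbval, hbval]
          have : (poaSetting N ε γ).ψ 0 = 0 := rfl
          rw [this]; simp [hi0, hi1]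
        have hA1' : (poaSetting N ε γ).agentU t b' 1 = 1 := by
          rw [hAU, hsum' 1, hbval, hbval]
          have : (poaSetting N ε γ).ψ 1 = ε := rfl
          rw [this]; simp [hi0, hi1, e1]
        rcases fin3_cases (x b') with h | h | h <;> rw [h] <;> rw [hvval] <;>
          simp only [if_neg h0, if_neg h1]
        · have := hmax' 1
          rw [hA1', h, hA0'] at this
          norm_num
          linarith
        · simp [e1]
        · simp [e2]
  · -- Wel 2 v = 1
    rw [hWelU]
    have hψ : (poaSetting N ε γ).ψ 2 = γ := rfl
    rw [hψ, sum_two h1N _ (fun k hk => by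
      rw [hvval]; simp [show (k:ℕ) ≠ 0 by omega, show (k:ℕ) ≠ 1 by omega])]
    rw [hvval, hvval]
    simp [hi0, hi1]
  · -- Wel 0 v = N - 2
    rw [hWelU]
    have hψ : (poaSetting N ε γ).ψ 0 = 0 := rfl
    rw [hψ]
    have key : ∑ k : Fin N, (v k 0 - 1) = -2 := by
      rw [sum_two h1N _ (fun k hk => by
        rw [hvval]; simp [show (k:ℕ) ≠ 0 by omega, show (k:ℕ) ≠ 1 by omega])]
      rw [hvval, hvval]
      simp [hi0, hi1]
      norm_num
    rw [Finset.sum_sub_distrib, Finset.sum_const, Finset.card_univ, Fintype.card_fin,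
      nsmul_eq_mul, mul_one] at key
    linarith
end
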